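/- arXiv:0902.3860 — 8 statements merged into one kernel-verified Lean document; each statement's English description precedes it below -/
import Mathlib

section
/- Let Γ be a distance-regular graph with valency k, diameter D ≥ 2, and intersection numbers a₁ and c₂. If some vertex x has a co-clique of size s ≥ 2 in its local graph Δ(x), then c₂ - 1 ≥ (s(a₁+1) - k) / C(s,2). -/
/-!
For `y` in the co-clique `S ⊆ Γ(x)`, the set `A y = {y} ∪ (Γ(x) ∩ Γ(y))` lies in `Γ(x)` and has
`a₁ + 1` elements. For distinct `y, z ∈ S` we have `d(y, z) = 2`, and `A y ∩ A z` consists of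
common neighbours of `y` and `z` other than `x`, so it has at most `c₂ - 1` elements. The
Bonferroni inequality `∑ |A y| ≤ |⋃ A y| + ∑_{y < z} |A y ∩ A z|` then gives
`s (a₁ + 1) ≤ k + C(s, 2) (c₂ - 1)`.
-/

open Finset SimpleGraph

/-- `G` is a distance-regular graph with diameter `D` and intersection numbers
`b i`, `c i`, `a i` (so valency `k = b 0` and `a i = k - b i - c i`). -/
structure IsDRG {V : Type*} [Fintype V] (G : SimpleGraph V) (D : ℕ)
    (b c a : ℕ → ℕ) : Prop where
  connected : G.Connected
  le_diam : ∀ x y : V, G.dist x y ≤ D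
  exists_diam : ∃ x y : V, G.dist x y = D
  card_b : ∀ i, i ≤ D → ∀ x y : V, G.dist x y = i →
      Nat.card {z : V | G.Adj y z ∧ G.dist x z = i + 1} = b i
  card_c : ∀ i, i ≤ D → ∀ x y : V, G.dist x y = i →
      Nat.card {z : V | G.Adj y z ∧ G.dist x z = i - 1} = c i
  card_a : ∀ i, i ≤ D → ∀ x y : V, G.dist x y = i →
      Nat.card {z : V | G.Adj y z ∧ G.dist x z = i} = a i

lemma sum_card_eq_sum_card_filter_mem {κ α : Type*} [DecidableEq α] (J : Finset κ)
    (B : κ → Finset α) (U : Finset α) (hB : ∀ j ∈ J, B j ⊆ U) :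
    ∑ j ∈ J, #(B j) = ∑ w ∈ U, #{j ∈ J | w ∈ B j} := by
  refine (sum_congr rfl fun j hj => ?_).trans
    (sum_card_bipartiteAbove_eq_sum_card_bipartiteBelow fun j w => w ∈ B j)
  rw [bipartiteAbove, filter_mem_eq_inter, inter_eq_right.2 (hB j hj)]

lemma two_mul_le_two_add_mul_sub_self (t : ℕ) : 2 * t ≤ 2 + (t * t - t) := by
  rcases le_or_gt t 2 with ht | ht
  · interval_cases t <;> simp
  · have : 3 * t ≤ t * t := Nat.mul_le_mul_right t ht
    omega

lemma two_mul_sum_card_le_card_biUnion_add_sum_card_inter {ι α : Type*} [DecidableEq ι]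
    [DecidableEq α] (S : Finset ι) (A : ι → Finset α) :
    2 * ∑ i ∈ S, #(A i) ≤ 2 * #(S.biUnion A) + ∑ p ∈ S.offDiag, #(A p.1 ∩ A p.2) := by
  set U := S.biUnion A
  have hA : ∀ i ∈ S, A i ⊆ U := fun i hi => subset_biUnion_of_mem A hi
  have hoffDiag : ∀ p ∈ S.offDiag, A p.1 ∩ A p.2 ⊆ U := fun p hp =>
    inter_subset_left.trans (hA p.1 (mem_offDiag.1 hp).1)
  have hfilter (w : α) :
      {p ∈ S.offDiag | w ∈ A p.1 ∩ A p.2} = {i ∈ S | w ∈ A i}.offDiag := by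
    ext ⟨i, j⟩
    simp only [mem_filter, mem_offDiag, mem_inter]
    tauto
  rw [sum_card_eq_sum_card_filter_mem S A U hA,
    sum_card_eq_sum_card_filter_mem _ _ U hoffDiag, card_eq_sum_ones U, mul_sum, mul_sum,
    ← sum_add_distrib]
  -- an element of exactly `t` of the sets contributes `2t` on the left, `2 + t(t-1)` on the right
  refine sum_le_sum fun w _ => ?_
  rw [hfilter, offDiag_card]
  simpa using two_mul_le_two_add_mul_sub_self #{i ∈ S | w ∈ A i}

lemma card_offDiag_eq_two_mul_choose_two {α : Type*} [DecidableEq α] (S : Finset α) :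
    #S.offDiag = 2 * (#S).choose 2 := by
  rw [offDiag_card, Nat.choose_two_right, ← Nat.mul_sub_one,
    Nat.mul_div_cancel' (Nat.even_mul_pred_self _).two_dvd]

namespace SimpleGraph

variable {V : Type*} {G : SimpleGraph V} {x y z : V}

lemma dist_eq_two_of_adj_of_adj (hxy : G.Adj x y) (hxz : G.Adj x z) (hne : y ≠ z)
    (hyz : ¬ G.Adj y z) : G.dist y z = 2 := by
  rw [dist, edist_eq_two_iff.2 ⟨hne, hyz, x, hxy.symm, hxz.symm⟩]
  rfl

variable [Fintype V] [DecidableEq V] [DecidableRel G.Adj]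

variable (G) in
def localClosedNbhd (x y : V) : Finset V :=
  insert y ({w | G.Adj x w ∧ G.Adj y w} : Finset V)

lemma card_localClosedNbhd : #(G.localClosedNbhd x y) = #{w | G.Adj x w ∧ G.Adj y w} + 1 :=
  card_insert_of_notMem (by simp)

lemma localClosedNbhd_subset (hxy : G.Adj x y) :
    G.localClosedNbhd x y ⊆ ({w | G.Adj x w} : Finset V) := by
  intro w hw
  rcases mem_insert.1 hw with rfl | hw
  · simpa using hxy
  · simpa using (mem_filter.1 hw).2.1

lemma localClosedNbhd_inter_subset (hne : y ≠ z) (hyz : ¬ G.Adj y z) (hxy : G.Adj x y) :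
    G.localClosedNbhd x y ∩ G.localClosedNbhd x z ⊆
      ({w | G.Adj y w ∧ G.Adj z w} : Finset V).erase x := by
  intro w hw
  simp only [localClosedNbhd, mem_inter, mem_insert, mem_filter, mem_univ, true_and] at hw
  simp only [mem_erase, mem_filter, mem_univ, true_and]
  rcases hw with ⟨rfl | ⟨hxw, hyw⟩, rfl | ⟨-, hzw⟩⟩
  · exact absurd rfl hne
  · exact absurd hzw.symm hyz
  · exact absurd hyw hyz
  · exact ⟨fun h => G.irrefl (h ▸ hxw), hyw, hzw⟩

end SimpleGraph

namespace IsDRG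

variable {V : Type*} [Fintype V] {G : SimpleGraph V} [DecidableRel G.Adj] {D : ℕ}
  {b c a : ℕ → ℕ} {x y z : V}

lemma card_adj (hG : IsDRG G D b c a) (x : V) : #{w | G.Adj x w} = b 0 := by
  simpa [Nat.card_eq_card_toFinset, dist_eq_one_iff_adj] using
    hG.card_b 0 (Nat.zero_le D) x x dist_self

lemma card_adj_adj_of_adj (hG : IsDRG G D b c a) (hD : 1 ≤ D) (hxy : G.Adj x y) :
    #{w | G.Adj x w ∧ G.Adj y w} = a 1 := by
  simpa [Nat.card_eq_card_toFinset, dist_eq_one_iff_adj, and_comm] using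
    hG.card_a 1 hD x y (dist_eq_one_iff_adj.2 hxy)

lemma card_adj_adj_of_dist_eq_two (hG : IsDRG G D b c a) (hD : 2 ≤ D) (hyz : G.dist y z = 2) :
    #{w | G.Adj y w ∧ G.Adj z w} = c 2 := by
  simpa [Nat.card_eq_card_toFinset, dist_eq_one_iff_adj, and_comm] using
    hG.card_c 2 hD y z hyz

variable [DecidableEq V]

lemma card_localClosedNbhd_of_adj (hG : IsDRG G D b c a) (hD : 1 ≤ D) (hxy : G.Adj x y) :
    #(G.localClosedNbhd x y) = a 1 + 1 := by
  rw [card_localClosedNbhd, hG.card_adj_adj_of_adj hD hxy]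

lemma card_localClosedNbhd_inter_add_one_le (hG : IsDRG G D b c a) (hD : 2 ≤ D)
    (hxy : G.Adj x y) (hxz : G.Adj x z) (hne : y ≠ z) (hyz : ¬ G.Adj y z) :
    #(G.localClosedNbhd x y ∩ G.localClosedNbhd x z) + 1 ≤ c 2 := by
  have hx : x ∈ ({w | G.Adj y w ∧ G.Adj z w} : Finset V) := by simp [hxy.symm, hxz.symm]
  calc #(G.localClosedNbhd x y ∩ G.localClosedNbhd x z) + 1
      ≤ #(({w | G.Adj y w ∧ G.Adj z w} : Finset V).erase x) + 1 :=
        Nat.add_le_add_right (card_le_card (localClosedNbhd_inter_subset hne hyz hxy)) 1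
    _ = c 2 := by
        rw [card_erase_add_one hx,
          hG.card_adj_adj_of_dist_eq_two hD (dist_eq_two_of_adj_of_adj hxy hxz hne hyz)]

lemma card_mul_add_choose_two_le (hG : IsDRG G D b c a) (hD : 2 ≤ D) {S : Finset V}
    (hS : ∀ y ∈ S, G.Adj x y) (hcoclique : ∀ y ∈ S, ∀ z ∈ S, y ≠ z → ¬ G.Adj y z) :
    #S * (a 1 + 1) + (#S).choose 2 ≤ b 0 + (#S).choose 2 * c 2 := by
  have hbonferroni := two_mul_sum_card_le_card_biUnion_add_sum_card_inter S (G.localClosedNbhd x)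
  have hsum : ∑ y ∈ S, #(G.localClosedNbhd x y) = #S * (a 1 + 1) := by
    rw [sum_congr rfl fun y hy => hG.card_localClosedNbhd_of_adj (by omega) (hS y hy),
      sum_const, smul_eq_mul]
  have hunion : #(S.biUnion (G.localClosedNbhd x)) ≤ b 0 :=
    hG.card_adj x ▸ card_le_card (biUnion_subset.2 fun y hy => localClosedNbhd_subset (hS y hy))
  have hpairs : ∑ p ∈ S.offDiag, #(G.localClosedNbhd x p.1 ∩ G.localClosedNbhd x p.2)
      + #S.offDiag ≤ #S.offDiag * c 2 := by
    rw [card_eq_sum_ones S.offDiag, ← sum_add_distrib, ← card_eq_sum_ones, ← smul_eq_mul]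
    refine sum_le_card_nsmul _ _ _ fun p hp => ?_
    obtain ⟨hy, hz, hne⟩ := mem_offDiag.1 hp
    exact hG.card_localClosedNbhd_inter_add_one_le hD (hS _ hy) (hS _ hz) hne
      (hcoclique _ hy _ hz hne)
  rw [card_offDiag_eq_two_mul_choose_two] at hpairs
  linarith

end IsDRG

/-- If a local graph of a distance-regular graph contains a co-clique of size `s ≥ 2`,
then `c₂ - 1 ≥ (s(a₁+1) - k) / C(s,2)`. -/
theorem stmt0 {V : Type*} [Fintype V] (G : SimpleGraph V) (D : ℕ) (b c a : ℕ → ℕ)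
    (hD : 2 ≤ D) (hG : IsDRG G D b c a)
    (x : V) (S : Finset V) (hSnbr : ∀ y ∈ S, G.Adj x y)
    (hScoclique : ∀ y ∈ S, ∀ z ∈ S, y ≠ z → ¬ G.Adj y z)
    (s : ℕ) (hcard : S.card = s) (hs : 2 ≤ s) :
    ((c 2 : ℝ) - 1) ≥ ((s : ℝ) * (a 1 + 1) - b 0) / (s.choose 2 : ℝ) := by
  classical
  subst hcard
  have hkey :
      ((#S * (a 1 + 1) + (#S).choose 2 : ℕ) : ℝ) ≤ ((b 0 + (#S).choose 2 * c 2 : ℕ) : ℝ) :=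
    mod_cast hG.card_mul_add_choose_two_le hD hSnbr hScoclique
  have hchoose : (0 : ℝ) < (#S).choose 2 := mod_cast Nat.choose_pos hs
  rw [ge_iff_le, div_le_iff₀ hchoose]
  push_cast at hkey
  linarith
end

section
/- There is no distance-regular graph with intersection array {44, 30, 5; 1, 3, 40}. -/
open Finset SimpleGraph

namespace DRG44

lemma succ_choose_two (k : ℕ) : (k+1).choose 2 = k.choose 2 + k := by
  rw [Nat.choose_succ_succ]
  simp [Nat.choose_one_right]
  omega

lemma nat_le_choose_two (n : ℕ) : n ≤ n.choose 2 + 1 := by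
  induction n with
  | zero => simp
  | succ k ih => rw [succ_choose_two]; omega

lemma choose_two_gt (n : ℕ) (h : 3 ≤ n) : n < n.choose 2 + 1 := by
  induction n with
  | zero => omega
  | succ k ih =>
    rw [succ_choose_two]
    rcases Nat.lt_or_ge k 3 with hk | hk
    · interval_cases k <;> simp_all [Nat.choose]
    · have := ih hk; omega

section

variable {V : Type*} [DecidableEq V]

/-- Core Bonferroni squeeze: four 14-subsets of a 44-set with pairwise intersections ≤ 2
force all pairwise intersections = 2 and no triple point. -/
lemma core (S A1 A2 A3 A4 : Finset V) (hS : S.card = 44)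
    (s1 : A1 ⊆ S) (s2 : A2 ⊆ S) (s3 : A3 ⊆ S) (s4 : A4 ⊆ S)
    (c1 : A1.card = 14) (c2 : A2.card = 14) (c3 : A3.card = 14) (c4 : A4.card = 14)
    (h12 : (A1 ∩ A2).card ≤ 2) (h13 : (A1 ∩ A3).card ≤ 2) (h14 : (A1 ∩ A4).card ≤ 2)
    (h23 : (A2 ∩ A3).card ≤ 2) (h24 : (A2 ∩ A4).card ≤ 2) (h34 : (A3 ∩ A4).card ≤ 2) :
    (A1 ∩ A2).card = 2 ∧ ∀ w ∈ S, ¬ (w ∈ A1 ∧ w ∈ A2 ∧ w ∈ A3) := by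
  set m : V → ℕ := fun w =>
    (if w ∈ A1 then 1 else 0) + (if w ∈ A2 then 1 else 0) +
    (if w ∈ A3 then 1 else 0) + (if w ∈ A4 then 1 else 0) with hm
  have hind : ∀ (A : Finset V), A ⊆ S → ∑ w ∈ S, (if w ∈ A then 1 else 0) = A.card := by
    intro A hA
    rw [Finset.sum_ite_mem, Finset.inter_eq_right.mpr hA, Finset.card_eq_sum_ones]
  have hsum : ∑ w ∈ S, m w = 56 := by
    simp only [hm]
    rw [Finset.sum_add_distrib, Finset.sum_add_distrib, Finset.sum_add_distrib,
      hind A1 s1, hind A2 s2, hind A3 s3, hind A4 s4, c1, c2, c3, c4]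
  have hind2 : ∀ (A B : Finset V), A ⊆ S →
      ∑ w ∈ S, ((if w ∈ A then 1 else 0) * (if w ∈ B then 1 else 0)) = (A ∩ B).card := by
    intro A B hA
    rw [← hind (A ∩ B) (fun w hw => hA (Finset.mem_inter.mp hw).1)]
    apply Finset.sum_congr rfl
    intro w _
    by_cases h1 : w ∈ A <;> by_cases h2 : w ∈ B <;> simp [h1, h2]
  have hchoose : ∀ w, (m w).choose 2 =
      (if w ∈ A1 then 1 else 0) * (if w ∈ A2 then 1 else 0) +
      (if w ∈ A1 then 1 else 0) * (if w ∈ A3 then 1 else 0) +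
      (if w ∈ A1 then 1 else 0) * (if w ∈ A4 then 1 else 0) +
      (if w ∈ A2 then 1 else 0) * (if w ∈ A3 then 1 else 0) +
      (if w ∈ A2 then 1 else 0) * (if w ∈ A4 then 1 else 0) +
      (if w ∈ A3 then 1 else 0) * (if w ∈ A4 then 1 else 0) := by
    intro w
    simp only [hm]
    by_cases h1 : w ∈ A1 <;> by_cases h2 : w ∈ A2 <;> by_cases h3 : w ∈ A3 <;>
      by_cases h4 : w ∈ A4 <;> simp [h1, h2, h3, h4] <;> rfl
  have hsumc : ∑ w ∈ S, ((m w).choose 2 + 1) =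
      (A1 ∩ A2).card + (A1 ∩ A3).card + (A1 ∩ A4).card +
      (A2 ∩ A3).card + (A2 ∩ A4).card + (A3 ∩ A4).card + 44 := by
    rw [Finset.sum_add_distrib, Finset.sum_const, smul_eq_mul, mul_one, hS]
    congr 1
    simp only [hchoose]
    rw [Finset.sum_add_distrib, Finset.sum_add_distrib, Finset.sum_add_distrib,
      Finset.sum_add_distrib, Finset.sum_add_distrib,
      hind2 A1 A2 s1, hind2 A1 A3 s1, hind2 A1 A4 s1, hind2 A2 A3 s2, hind2 A2 A4 s2,
      hind2 A3 A4 s3]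
  have hle : ∑ w ∈ S, m w ≤ ∑ w ∈ S, ((m w).choose 2 + 1) :=
    Finset.sum_le_sum (fun w _ => nat_le_choose_two (m w))
  rw [hsum, hsumc] at hle
  constructor
  · omega
  · rintro w hw ⟨w1, w2, w3⟩
    have hstrict : ∑ w ∈ S, m w < ∑ w ∈ S, ((m w).choose 2 + 1) := by
      apply Finset.sum_lt_sum (fun v _ => nat_le_choose_two (m v))
      refine ⟨w, hw, ?_⟩
      apply choose_two_gt
      simp only [hm, if_pos w1, if_pos w2, if_pos w3]
      omega
    rw [hsum, hsumc] at hstrict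
    omega

lemma sum_filter_card_comm (s t : Finset V) (r : V → V → Prop) [DecidableRel r] :
    ∑ a ∈ s, (t.filter (r a)).card = ∑ b ∈ t, (s.filter (fun a => r a b)).card := by
  simp only [Finset.card_filter]
  exact Finset.sum_comm

end

section Graph

variable {V : Type*} [Fintype V] [DecidableEq V] {G : SimpleGraph V} [DecidableRel G.Adj]

variable (G) in
/-- The closed neighborhood of `a` within the neighborhood of `x`. -/
def Abar (x a : V) : Finset V := insert a (G.neighborFinset x ∩ G.neighborFinset a)

lemma memN {v w : V} : w ∈ G.neighborFinset v ↔ G.Adj v w := by simp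

variable (hdeg : ∀ v : V, (G.neighborFinset v).card = 44)
  (hlam : ∀ x y : V, G.Adj x y → (G.neighborFinset x ∩ G.neighborFinset y).card = 13)
  (hmu : ∀ x y : V, x ≠ y → ¬ G.Adj x y → ∀ p, G.Adj x p → G.Adj p y →
    (G.neighborFinset x ∩ G.neighborFinset y).card = 3)

lemma abar_subset {x a : V} (ha : a ∈ G.neighborFinset x) : Abar G x a ⊆ G.neighborFinset x := by
  intro v hv
  rcases Finset.mem_insert.mp hv with rfl | hv
  · exact ha
  · exact (Finset.mem_inter.mp hv).1

include hlam in
lemma abar_card {x a : V} (ha : a ∈ G.neighborFinset x) : (Abar G x a).card = 14 := by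
  rw [Abar, Finset.card_insert_of_notMem
    (fun hmem => G.irrefl (memN.mp (Finset.mem_inter.mp hmem).2)),
    hlam x a (memN.mp ha)]

lemma abar_inter {x a b : V} (ha : a ∈ G.neighborFinset x) (hb : b ∈ G.neighborFinset x)
    (hab : a ≠ b) (hnadj : ¬ G.Adj a b) :
    Abar G x a ∩ Abar G x b =
      G.neighborFinset x ∩ G.neighborFinset a ∩ G.neighborFinset b := by
  ext v
  simp only [Abar, Finset.mem_inter, Finset.mem_insert, mem_neighborFinset]
  constructor
  · rintro ⟨rfl | ⟨h1, h2⟩, hv2⟩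
    · rcases hv2 with rfl | ⟨_, h4⟩
      · exact absurd rfl hab
      · exact absurd h4.symm hnadj
    · rcases hv2 with rfl | ⟨_, h4⟩
      · exact absurd h2 hnadj
      · exact ⟨⟨h1, h2⟩, h4⟩
  · rintro ⟨⟨h1, h2⟩, h3⟩
    exact ⟨Or.inr ⟨h1, h2⟩, Or.inr ⟨h1, h3⟩⟩

include hmu in
lemma mu_pair {x a b : V} (ha : a ∈ G.neighborFinset x) (hb : b ∈ G.neighborFinset x)
    (hab : a ≠ b) (hnadj : ¬ G.Adj a b) :
    (G.neighborFinset a ∩ G.neighborFinset b).card = 3 := by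
  exact hmu a b hab hnadj x (memN.mp ha).symm (memN.mp hb)

include hmu in
lemma abar_inter_card_le {x a b : V} (ha : a ∈ G.neighborFinset x)
    (hb : b ∈ G.neighborFinset x) (hab : a ≠ b) (hnadj : ¬ G.Adj a b) :
    (Abar G x a ∩ Abar G x b).card ≤ 2 := by
  rw [abar_inter ha hb hab hnadj]
  have hsub : G.neighborFinset x ∩ G.neighborFinset a ∩ G.neighborFinset b ⊆
      (G.neighborFinset a ∩ G.neighborFinset b).erase x := by
    intro v hv
    simp only [Finset.mem_inter, mem_neighborFinset] at hv
    refine Finset.mem_erase.mpr ⟨?_, ?_⟩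
    · rintro rfl; exact G.irrefl hv.1.1
    · simp only [Finset.mem_inter, mem_neighborFinset]; exact ⟨hv.1.2, hv.2⟩
  have hx : x ∈ G.neighborFinset a ∩ G.neighborFinset b :=
    Finset.mem_inter.mpr ⟨memN.mpr (memN.mp ha).symm, memN.mpr (memN.mp hb).symm⟩
  calc (G.neighborFinset x ∩ G.neighborFinset a ∩ G.neighborFinset b).card
      ≤ ((G.neighborFinset a ∩ G.neighborFinset b).erase x).card := Finset.card_le_card hsub
    _ = (G.neighborFinset a ∩ G.neighborFinset b).card - 1 := Finset.card_erase_of_mem hx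
    _ ≤ 2 := by rw [mu_pair hmu ha hb hab hnadj]

include hdeg hlam in
lemma extend {x : V} (B : Finset V) (hcard : B.card ≤ 42) :
    ∃ u ∈ G.neighborFinset x, u ∉ B := by
  have : (G.neighborFinset x \ B).Nonempty := by
    rw [← Finset.card_pos]
    have h1 : (G.neighborFinset x \ B).card ≥ (G.neighborFinset x).card - B.card :=
      Finset.le_card_sdiff B (G.neighborFinset x)
    rw [hdeg x] at h1
    omega
  obtain ⟨u, hu⟩ := this
  rw [Finset.mem_sdiff] at hu
  exact ⟨u, hu.1, hu.2⟩

/-- properties of a vertex outside the closed neighborhood -/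
lemma notMem_abar {x a u : V} (hu : u ∈ G.neighborFinset x) (hna : u ∉ Abar G x a) :
    u ≠ a ∧ ¬ G.Adj a u := by
  constructor
  · rintro rfl; exact hna (Finset.mem_insert_self _ _)
  · intro h
    exact hna (Finset.mem_insert.mpr (Or.inr (Finset.mem_inter.mpr ⟨hu, memN.mpr h⟩)))

include hdeg hlam hmu in
/-- Key: any two nonadjacent vertices in a neighborhood have exactly two common
neighbors inside that neighborhood. -/
lemma star {x a b : V} (ha : a ∈ G.neighborFinset x) (hb : b ∈ G.neighborFinset x)
    (hab : a ≠ b) (hnadj : ¬ G.Adj a b) :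
    (G.neighborFinset x ∩ G.neighborFinset a ∩ G.neighborFinset b).card = 2 := by
  obtain ⟨u, hu, hu'⟩ := extend hdeg hlam (x := x) (Abar G x a ∪ Abar G x b)
    (le_trans (Finset.card_union_le _ _)
      (by rw [abar_card hlam ha, abar_card hlam hb]; omega))
  rw [Finset.mem_union] at hu'
  push_neg at hu'
  obtain ⟨hua, hub⟩ := hu'
  obtain ⟨hua1, hua2⟩ := notMem_abar hu hua
  obtain ⟨hub1, hub2⟩ := notMem_abar hu hub
  obtain ⟨w, hw, hw'⟩ := extend hdeg hlam (x := x) (Abar G x a ∪ Abar G x b ∪ Abar G x u)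
    (le_trans (Finset.card_union_le _ _) (by
      have := Finset.card_union_le (Abar G x a) (Abar G x b)
      rw [abar_card hlam ha, abar_card hlam hb] at this
      rw [abar_card hlam hu]
      omega))
  simp only [Finset.mem_union] at hw'
  push_neg at hw'
  obtain ⟨⟨hwa, hwb⟩, hwu⟩ := hw'
  obtain ⟨hwa1, hwa2⟩ := notMem_abar hw hwa
  obtain ⟨hwb1, hwb2⟩ := notMem_abar hw hwb
  obtain ⟨hwu1, hwu2⟩ := notMem_abar hw hwu
  have hcore := core (G.neighborFinset x) (Abar G x a) (Abar G x b) (Abar G x u) (Abar G x w)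
    (hdeg x) (abar_subset ha) (abar_subset hb) (abar_subset hu) (abar_subset hw)
    (abar_card hlam ha) (abar_card hlam hb) (abar_card hlam hu) (abar_card hlam hw)
    (abar_inter_card_le hmu ha hb hab hnadj)
    (abar_inter_card_le hmu ha hu (Ne.symm hua1) hua2)
    (abar_inter_card_le hmu ha hw (Ne.symm hwa1) hwa2)
    (abar_inter_card_le hmu hb hu (Ne.symm hub1) hub2)
    (abar_inter_card_le hmu hb hw (Ne.symm hwb1) hwb2)
    (abar_inter_card_le hmu hu hw (Ne.symm hwu1) hwu2)
  rw [← abar_inter ha hb hab hnadj]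
  exact hcore.1

include hdeg hlam hmu in
/-- No vertex is adjacent to a 3-coclique inside one of its neighborhoods. -/
lemma no3 {x y z1 z2 z3 : V} (hxy : G.Adj x y)
    (h1 : z1 ∈ G.neighborFinset x ∩ G.neighborFinset y)
    (h2 : z2 ∈ G.neighborFinset x ∩ G.neighborFinset y)
    (h3 : z3 ∈ G.neighborFinset x ∩ G.neighborFinset y)
    (h12 : z1 ≠ z2) (h13 : z1 ≠ z3) (h23 : z2 ≠ z3)
    (n12 : ¬ G.Adj z1 z2) (n13 : ¬ G.Adj z1 z3) (n23 : ¬ G.Adj z2 z3) : False := by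
  rw [Finset.mem_inter] at h1 h2 h3
  obtain ⟨hz1, hz1y⟩ := h1
  obtain ⟨hz2, hz2y⟩ := h2
  obtain ⟨hz3, hz3y⟩ := h3
  obtain ⟨u, hu, hu'⟩ := extend hdeg hlam (x := x)
    (Abar G x z1 ∪ Abar G x z2 ∪ Abar G x z3)
    (le_trans (Finset.card_union_le _ _) (by
      have := Finset.card_union_le (Abar G x z1) (Abar G x z2)
      rw [abar_card hlam hz1, abar_card hlam hz2] at this
      rw [abar_card hlam hz3]
      omega))
  simp only [Finset.mem_union] at hu'
  push_neg at hu'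
  obtain ⟨⟨hu1, hu2⟩, hu3⟩ := hu'
  obtain ⟨hu11, hu12⟩ := notMem_abar hu hu1
  obtain ⟨hu21, hu22⟩ := notMem_abar hu hu2
  obtain ⟨hu31, hu32⟩ := notMem_abar hu hu3
  have hcore := core (G.neighborFinset x) (Abar G x z1) (Abar G x z2) (Abar G x z3) (Abar G x u)
    (hdeg x) (abar_subset hz1) (abar_subset hz2) (abar_subset hz3) (abar_subset hu)
    (abar_card hlam hz1) (abar_card hlam hz2) (abar_card hlam hz3) (abar_card hlam hu)
    (abar_inter_card_le hmu hz1 hz2 h12 n12)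
    (abar_inter_card_le hmu hz1 hz3 h13 n13)
    (abar_inter_card_le hmu hz1 hu (Ne.symm hu11) hu12)
    (abar_inter_card_le hmu hz2 hz3 h23 n23)
    (abar_inter_card_le hmu hz2 hu (Ne.symm hu21) hu22)
    (abar_inter_card_le hmu hz3 hu (Ne.symm hu31) hu32)
  have hyA : ∀ z : V, z ∈ G.neighborFinset x → z ∈ G.neighborFinset y → y ∈ Abar G x z := by
    intro z hzx hzy
    refine Finset.mem_insert.mpr (Or.inr (Finset.mem_inter.mpr ⟨?_, ?_⟩))
    · rwa [memN]
    · exact memN.mpr (memN.mp hzy).symm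
  exact hcore.2 y (memN.mpr hxy)
    ⟨hyA z1 hz1 hz1y, hyA z2 hz2 hz2y, hyA z3 hz3 hz3y⟩

include hdeg hlam hmu in
/-- For an edge `xy` and a nonadjacent pair `z w` in the common neighborhood
`L = N x ∩ N y`, the pair `z w` has exactly one common neighbor inside `L`. -/
lemma exactly1 {x y z w : V} (hxy : G.Adj x y)
    (hz : z ∈ G.neighborFinset x ∩ G.neighborFinset y)
    (hw : w ∈ G.neighborFinset x ∩ G.neighborFinset y)
    (hzw : z ≠ w) (hnadj : ¬ G.Adj z w) :
    ((G.neighborFinset x ∩ G.neighborFinset y) ∩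
      (G.neighborFinset z ∩ G.neighborFinset w)).card = 1 := by
  rw [Finset.mem_inter] at hz hw
  obtain ⟨hzx, hzy⟩ := hz
  obtain ⟨hwx, hwy⟩ := hw
  set T := G.neighborFinset z ∩ G.neighborFinset w with hT
  have hTcard : T.card = 3 := mu_pair hmu hzx hwx hzw hnadj
  have hxT : x ∈ T := Finset.mem_inter.mpr
    ⟨memN.mpr (memN.mp hzx).symm, memN.mpr (memN.mp hwx).symm⟩
  have hyT : y ∈ T := Finset.mem_inter.mpr
    ⟨memN.mpr (memN.mp hzy).symm, memN.mpr (memN.mp hwy).symm⟩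
  have hxy' : x ≠ y := G.ne_of_adj hxy
  -- N x ∩ T = T.erase x
  have key : ∀ v : V, v ∈ G.neighborFinset v → False := fun v hv => G.irrefl (memN.mp hv)
  have hEx : G.neighborFinset x ∩ T = T.erase x := by
    have hsub : G.neighborFinset x ∩ T ⊆ T.erase x := by
      intro v hv
      rw [Finset.mem_inter] at hv
      refine Finset.mem_erase.mpr ⟨fun hveq => ?_, hv.2⟩
      exact key x (hveq ▸ hv.1)
    apply Finset.eq_of_subset_of_card_le hsub
    rw [Finset.card_erase_of_mem hxT, hTcard]
    have := star hdeg hlam hmu hzx hwx hzw hnadj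
    rw [Finset.inter_assoc, ← hT] at this
    omega
  have hEy : G.neighborFinset y ∩ T = T.erase y := by
    have hsub : G.neighborFinset y ∩ T ⊆ T.erase y := by
      intro v hv
      rw [Finset.mem_inter] at hv
      refine Finset.mem_erase.mpr ⟨fun hveq => ?_, hv.2⟩
      exact key y (hveq ▸ hv.1)
    apply Finset.eq_of_subset_of_card_le hsub
    rw [Finset.card_erase_of_mem hyT, hTcard]
    have := star hdeg hlam hmu hzy hwy hzw hnadj
    rw [Finset.inter_assoc, ← hT] at this
    omega
  have hsplit : (G.neighborFinset x ∩ G.neighborFinset y) ∩ T = (T.erase x).erase y := by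
    rw [Finset.inter_assoc]
    rw [show G.neighborFinset y ∩ T = T.erase y from hEy]
    ext v
    simp only [Finset.mem_inter, Finset.mem_erase]
    constructor
    · rintro ⟨h1, h2, h3⟩
      have : v ∈ G.neighborFinset x ∩ T := Finset.mem_inter.mpr ⟨h1, h3⟩
      rw [hEx, Finset.mem_erase] at this
      exact ⟨h2, this⟩
    · rintro ⟨h1, h2, h3⟩
      have : v ∈ G.neighborFinset x ∩ T := by
        rw [hEx, Finset.mem_erase]; exact ⟨h2, h3⟩
      rw [Finset.mem_inter] at this
      exact ⟨this.1, h1, h3⟩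
  rw [hsplit, Finset.card_erase_of_mem (Finset.mem_erase.mpr ⟨hxy'.symm, hyT⟩),
    Finset.card_erase_of_mem hxT, hTcard]

include hdeg hlam hmu in
lemma no_edge {x y : V} (hxy : G.Adj x y) : False := by
  set L := G.neighborFinset x ∩ G.neighborFinset y with hLdef
  have hL : L.card = 13 := hlam x y hxy
  set d : V → ℕ := fun z => (L ∩ G.neighborFinset z).card with hd
  set NB : V → Finset V := fun z => L.filter (fun w => w ≠ z ∧ ¬ G.Adj z w) with hNB
  have memNB : ∀ z w : V, w ∈ NB z ↔ (w ∈ L ∧ w ≠ z ∧ ¬ G.Adj z w) := by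
    intro z w; rw [hNB]; exact Finset.mem_filter
  -- (NB z).card + d z = 12 for z ∈ L
  have key0 : ∀ z ∈ L, (NB z).card + d z = 12 := by
    intro z hz
    have hdisj : Disjoint (NB z) (L ∩ G.neighborFinset z) := by
      rw [Finset.disjoint_left]
      intro w hw1 hw2
      exact ((memNB z w).mp hw1).2.2 (memN.mp (Finset.mem_inter.mp hw2).2)
    have hunion : NB z ∪ (L ∩ G.neighborFinset z) = L.erase z := by
      ext w
      simp only [Finset.mem_union, memNB, Finset.mem_inter, Finset.mem_erase, memN]
      constructor
      · rintro (⟨h1, h2, _⟩ | ⟨h1, h2⟩)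
        · exact ⟨h2, h1⟩
        · exact ⟨fun hq => G.irrefl (hq ▸ h2), h1⟩
      · rintro ⟨h1, h2⟩
        by_cases h3 : G.Adj z w
        · exact Or.inr ⟨h2, h3⟩
        · exact Or.inl ⟨h2, h1, h3⟩
    have hcu := Finset.card_union_of_disjoint hdisj
    rw [hunion, Finset.card_erase_of_mem hz, hL] at hcu
    simp only [hd]
    omega
  -- nonadjacent pairs in L: d z + d w = 12
  have keyedge : ∀ z ∈ L, ∀ w ∈ L, z ≠ w → ¬ G.Adj z w → d z + d w = 12 := by
    intro z hz w hw hzw hnadj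
    set U := (L ∩ G.neighborFinset z) ∪ (L ∩ G.neighborFinset w) with hU
    have hUL : U ⊆ L := by
      intro v hv
      rcases Finset.mem_union.mp hv with h | h
      · exact (Finset.mem_inter.mp h).1
      · exact (Finset.mem_inter.mp h).1
    have hLU : L \ U = {z, w} := by
      ext v
      simp only [Finset.mem_sdiff, hU, Finset.mem_union, Finset.mem_inter, memN,
        Finset.mem_insert, Finset.mem_singleton]
      constructor
      · rintro ⟨hvL, hv2⟩
        push_neg at hv2
        by_contra hc
        push_neg at hc
        have nzv : ¬ G.Adj z v := fun h => hv2.1 hvL h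
        have nwv : ¬ G.Adj w v := fun h => hv2.2 hvL h
        exact no3 hdeg hlam hmu hxy hz hw hvL hzw (Ne.symm hc.1) (Ne.symm hc.2)
          hnadj nzv nwv
      · rintro (rfl | rfl)
        · refine ⟨hz, ?_⟩
          rintro (⟨_, h⟩ | ⟨_, h⟩)
          · exact G.irrefl h
          · exact hnadj h.symm
        · refine ⟨hw, ?_⟩
          rintro (⟨_, h⟩ | ⟨_, h⟩)
          · exact hnadj h
          · exact G.irrefl h
    have h1 : (L \ U).card = 13 - U.card := by rw [Finset.card_sdiff_of_subset hUL, hL]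
    have h2 : ({z, w} : Finset V).card = 2 := Finset.card_pair hzw
    have hle := Finset.card_le_card hUL
    rw [hL] at hle
    rw [hLU, h2] at h1
    have hUcard : U.card = 11 := by omega
    have hIU : (L ∩ G.neighborFinset z) ∩ (L ∩ G.neighborFinset w) =
        L ∩ (G.neighborFinset z ∩ G.neighborFinset w) := by
      ext v; simp only [Finset.mem_inter]; tauto
    have hinter : ((L ∩ G.neighborFinset z) ∩ (L ∩ G.neighborFinset w)).card = 1 := by
      rw [hIU, hLdef]
      exact exactly1 hdeg hlam hmu hxy (hLdef ▸ hz) (hLdef ▸ hw) hzw hnadj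
    have hcui := Finset.card_union_add_card_inter
      (L ∩ G.neighborFinset z) (L ∩ G.neighborFinset w)
    rw [← hU, hUcard, hinter] at hcui
    simp only [hd]
    omega
  -- the outside part W of N x
  set W := G.neighborFinset x \ Abar G x y with hW
  have hyNx : y ∈ G.neighborFinset x := memN.mpr hxy
  have hWcard : W.card = 30 := by
    rw [hW, Finset.card_sdiff_of_subset (abar_subset hyNx), hdeg x, abar_card hlam hyNx]
  have hWprop : ∀ w ∈ W, w ∈ G.neighborFinset x ∧ w ≠ y ∧ ¬ G.Adj y w := by
    intro w hw
    rw [hW, Finset.mem_sdiff] at hw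
    obtain ⟨h1, h2⟩ := hw
    obtain ⟨h3, h4⟩ := notMem_abar h1 h2
    exact ⟨h1, h3, h4⟩
  have hzdecomp : ∀ z ∈ L, (W.filter (fun w => G.Adj z w)).card + d z + 1 = 13 := by
    intro z hz
    have hzx : z ∈ G.neighborFinset x := (Finset.mem_inter.mp (hLdef ▸ hz)).1
    have hzy : z ∈ G.neighborFinset y := (Finset.mem_inter.mp (hLdef ▸ hz)).2
    have h13 : (G.neighborFinset z ∩ G.neighborFinset x).card = 13 :=
      hlam z x (memN.mp hzx).symm
    have hsplit : G.neighborFinset z ∩ G.neighborFinset x =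
        (G.neighborFinset z ∩ Abar G x y) ∪ (G.neighborFinset z ∩ W) := by
      rw [hW, ← Finset.inter_union_distrib_left,
        Finset.union_sdiff_of_subset (abar_subset hyNx)]
    have hdisj : Disjoint (G.neighborFinset z ∩ Abar G x y) (G.neighborFinset z ∩ W) := by
      rw [Finset.disjoint_left]
      intro v hv1 hv2
      rw [hW] at hv2
      exact (Finset.mem_sdiff.mp (Finset.mem_inter.mp hv2).2).2 (Finset.mem_inter.mp hv1).2
    have hA : G.neighborFinset z ∩ Abar G x y = insert y (G.neighborFinset z ∩ L) := by
      ext v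
      simp only [Finset.mem_inter, Abar, Finset.mem_insert, hLdef, memN]
      constructor
      · rintro ⟨h1, rfl | ⟨h2, h3⟩⟩
        · exact Or.inl rfl
        · exact Or.inr ⟨h1, h2, h3⟩
      · rintro (rfl | ⟨h1, h2, h3⟩)
        · exact ⟨(memN.mp hzy).symm, Or.inl rfl⟩
        · exact ⟨h1, Or.inr ⟨h2, h3⟩⟩
    have hynotin : y ∉ G.neighborFinset z ∩ L := by
      intro hc
      have hkk := (Finset.mem_inter.mp ((hLdef ▸ (Finset.mem_inter.mp hc).2 :
        y ∈ G.neighborFinset x ∩ G.neighborFinset y))).2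
      exact G.irrefl (memN.mp hkk)
    have hAcard : (G.neighborFinset z ∩ Abar G x y).card = d z + 1 := by
      rw [hA, Finset.card_insert_of_notMem hynotin, Finset.inter_comm]
    have hWz : G.neighborFinset z ∩ W = W.filter (fun w => G.Adj z w) := by
      ext v
      simp only [Finset.mem_inter, Finset.mem_filter, memN]
      tauto
    have hcu := Finset.card_union_of_disjoint hdisj
    rw [← hsplit, h13, hAcard, hWz] at hcu
    omega
  -- double counting
  have hexch : ∑ z ∈ L, (W.filter (fun w => G.Adj z w)).card
      = ∑ w ∈ W, (L.filter (fun z => G.Adj z w)).card :=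
    sum_filter_card_comm L W (fun a b => G.Adj a b)
  have hWstar : ∀ w ∈ W, (L.filter (fun z => G.Adj z w)).card = 2 := by
    intro w hw
    obtain ⟨h1, h2, h3⟩ := hWprop w hw
    have hEq : L.filter (fun z => G.Adj z w) =
        G.neighborFinset x ∩ G.neighborFinset y ∩ G.neighborFinset w := by
      ext v
      constructor
      · intro hvv
        obtain ⟨h1', h2'⟩ := Finset.mem_filter.mp hvv
        exact Finset.mem_inter.mpr ⟨hLdef ▸ h1', memN.mpr h2'.symm⟩
      · intro hvv
        obtain ⟨h1', h2'⟩ := Finset.mem_inter.mp hvv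
        exact Finset.mem_filter.mpr ⟨hLdef ▸ h1', (memN.mp h2').symm⟩
    rw [hEq]
    exact star hdeg hlam hmu hyNx h1 (Ne.symm h2) h3
  have sum60 : ∑ z ∈ L, (W.filter (fun w => G.Adj z w)).card = 60 := by
    rw [hexch, Finset.sum_congr rfl hWstar, Finset.sum_const, hWcard]
    rfl
  have sumd : ∑ z ∈ L, d z = 96 := by
    have h1 : ∑ z ∈ L, ((W.filter (fun w => G.Adj z w)).card + d z + 1) = ∑ z ∈ L, 13 :=
      Finset.sum_congr rfl (fun z hz => by rw [hzdecomp z hz])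
    rw [Finset.sum_add_distrib, Finset.sum_add_distrib, sum60, Finset.sum_const, hL,
      Finset.sum_const, hL] at h1
    simp only [smul_eq_mul, mul_one] at h1
    omega
  have sumdb : ∑ z ∈ L, (NB z).card = 60 := by
    have h1 : ∑ z ∈ L, ((NB z).card + d z) = ∑ z ∈ L, 12 :=
      Finset.sum_congr rfl (fun z hz => by rw [key0 z hz])
    rw [Finset.sum_add_distrib, sumd, Finset.sum_const, hL] at h1
    simp only [smul_eq_mul] at h1
    omega
  -- pick a vertex of maximal complement-degree
  have hLne : L.Nonempty := by rw [← Finset.card_pos, hL]; omega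
  obtain ⟨v, hvL, hvmax0⟩ := Finset.exists_max_image L (fun z => (NB z).card) hLne
  obtain ⟨m, hmdef⟩ : ∃ k : ℕ, (NB v).card = k := ⟨_, rfl⟩
  have hvmax : ∀ z ∈ L, (NB z).card ≤ m := fun z hz => hmdef ▸ hvmax0 z hz
  have hedge : ∀ z ∈ L, ∀ w, w ∈ NB z → (NB z).card + (NB w).card = 12 := by
    intro z hz w hw
    obtain ⟨hwL, hwne, hwnadj⟩ := (memNB z w).mp hw
    have h1 := key0 z hz
    have h2 := key0 w hwL
    have h3 := keyedge z hz w hwL (Ne.symm hwne) hwnadj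
    omega
  have hm1 : 1 ≤ m := by
    by_contra hc
    push_neg at hc
    have hz0 : ∀ z ∈ L, (NB z).card = 0 := fun z hz => by have := hvmax z hz; omega
    have : ∑ z ∈ L, (NB z).card = 0 := Finset.sum_eq_zero hz0
    omega
  obtain ⟨u0, hu0⟩ : (NB v).Nonempty := by rw [← Finset.card_pos]; omega
  have hu0L := ((memNB v u0).mp hu0).1
  have hu0e := hedge v hvL u0 hu0
  have hsymmNB : ∀ z ∈ L, ∀ w, w ∈ NB z → z ∈ NB w := by
    intro z hz w hw
    obtain ⟨hwL, hwne, hwnadj⟩ := (memNB z w).mp hw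
    exact (memNB w z).mpr ⟨hz, Ne.symm hwne, fun h => hwnadj h.symm⟩
  have hmle : m ≤ 11 := by
    have hvNBu : v ∈ NB u0 := hsymmNB v hvL u0 hu0
    have : 1 ≤ (NB u0).card := Finset.card_pos.mpr ⟨v, hvNBu⟩
    omega
  have hm6 : 6 ≤ m := by have := hvmax u0 hu0L; omega
  have hBcard : (NB v).card = m := hmdef
  have hBL : NB v ⊆ L := fun u hu => ((memNB v u).mp hu).1
  have hBsub : NB v ⊆ L.erase v := by
    intro u hu
    obtain ⟨h1, h2, _⟩ := (memNB v u).mp hu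
    exact Finset.mem_erase.mpr ⟨h2, h1⟩
  set R := (L.erase v) \ (NB v) with hR
  have hRcard : R.card = 12 - m := by
    rw [hR, Finset.card_sdiff_of_subset hBsub, Finset.card_erase_of_mem hvL, hL, hBcard]
  have hRL : R ⊆ L := fun r hr => Finset.mem_of_mem_erase (Finset.mem_sdiff.mp hr).1
  have hBdb : ∀ u ∈ (NB v), (NB u).card = 12 - m := by
    intro u hu
    have := hedge v hvL u hu
    omega
  have hclique : ∀ u ∈ (NB v), ∀ u' ∈ (NB v), u ≠ u' → G.Adj u u' := by
    intro u hu u' hu' hne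
    by_contra hc
    obtain ⟨huL, hunv, hunadj⟩ := (memNB v u).mp hu
    obtain ⟨hu'L, hu'nv, hu'nadj⟩ := (memNB v u').mp hu'
    exact no3 hdeg hlam hmu hxy hvL huL hu'L (Ne.symm hunv) (Ne.symm hu'nv) hne
      hunadj hu'nadj hc
  have hNBu : ∀ u ∈ (NB v), (NB u ∩ R).card = 11 - m := by
    intro u hu
    obtain ⟨huL, hunv, hunadj⟩ := (memNB v u).mp hu
    have hvNBu : v ∈ NB u := hsymmNB v hvL u hu
    have hsub : NB u ⊆ insert v R := by
      intro w hw
      obtain ⟨hwL, hwnu, hwnadj⟩ := (memNB u w).mp hw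
      by_cases hwv : w = v
      · exact Finset.mem_insert.mpr (Or.inl hwv)
      · refine Finset.mem_insert.mpr (Or.inr ?_)
        rw [hR, Finset.mem_sdiff]
        refine ⟨Finset.mem_erase.mpr ⟨hwv, hwL⟩, fun hwB => ?_⟩
        exact hwnadj (hclique w hwB u hu hwnu).symm
    have hEq : NB u = insert v (NB u ∩ R) := by
      ext w
      simp only [Finset.mem_insert, Finset.mem_inter]
      constructor
      · intro hw
        rcases Finset.mem_insert.mp (hsub hw) with h | h
        · exact Or.inl h
        · exact Or.inr ⟨hw, h⟩
      · rintro (rfl | ⟨h, _⟩)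
        · exact hvNBu
        · exact h
    have hvnotR : v ∉ NB u ∩ R := by
      intro hc
      have h1 := (Finset.mem_sdiff.mp (Finset.mem_inter.mp hc).2).1
      exact (Finset.mem_erase.mp h1).1 rfl
    have hcard := congrArg Finset.card hEq
    rw [Finset.card_insert_of_notMem hvnotR] at hcard
    have hmu' := hBdb u hu
    omega
  -- exchange between (NB v) and R
  have hBR : ∑ u ∈ (NB v), (NB u ∩ R).card = ∑ r ∈ R, (NB r ∩ (NB v)).card := by
    have h := sum_filter_card_comm (NB v) R (fun a b => a ≠ b ∧ ¬ G.Adj a b)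
    have e1 : ∀ u ∈ (NB v), (R.filter (fun r => u ≠ r ∧ ¬ G.Adj u r)) = NB u ∩ R := by
      intro u hu
      ext r
      simp only [Finset.mem_filter, Finset.mem_inter]
      constructor
      · rintro ⟨hr, hne, hnadj⟩
        exact ⟨(memNB u r).mpr ⟨hRL hr, Ne.symm hne, hnadj⟩, hr⟩
      · rintro ⟨hnb, hr⟩
        obtain ⟨_, hne, hnadj⟩ := (memNB u r).mp hnb
        exact ⟨hr, Ne.symm hne, hnadj⟩
    have e2 : ∀ r ∈ R, ((NB v).filter (fun u => u ≠ r ∧ ¬ G.Adj u r)) = NB r ∩ (NB v) := by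
      intro r hr
      ext u
      simp only [Finset.mem_filter, Finset.mem_inter]
      constructor
      · rintro ⟨hu, hne, hnadj⟩
        exact ⟨(memNB r u).mpr ⟨hBL hu, hne, fun hadj => hnadj hadj.symm⟩, hu⟩
      · rintro ⟨hnb, hu⟩
        obtain ⟨_, hne, hnadj⟩ := (memNB r u).mp hnb
        exact ⟨hu, hne, fun hadj => hnadj hadj.symm⟩
    calc ∑ u ∈ (NB v), (NB u ∩ R).card
        = ∑ u ∈ (NB v), (R.filter (fun r => u ≠ r ∧ ¬ G.Adj u r)).card :=
          Finset.sum_congr rfl (fun u hu => by rw [e1 u hu])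
      _ = ∑ r ∈ R, ((NB v).filter (fun u => u ≠ r ∧ ¬ G.Adj u r)).card := h
      _ = ∑ r ∈ R, (NB r ∩ (NB v)).card :=
          Finset.sum_congr rfl (fun r hr => by rw [e2 r hr])
  have hBRval : ∑ r ∈ R, (NB r ∩ (NB v)).card = m * (11 - m) := by
    rw [← hBR, Finset.sum_congr rfl hNBu, Finset.sum_const, hBcard, smul_eq_mul]
  have bound3 : m * (11 - m) ≤ ∑ r ∈ R, (NB r).card := by
    rw [← hBRval]
    exact Finset.sum_le_sum (fun r _ => Finset.card_le_card Finset.inter_subset_left)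
  have bound2 : ∑ r ∈ R, (NB r).card ≤ (12 - m) * m := by
    calc ∑ r ∈ R, (NB r).card ≤ ∑ r ∈ R, m :=
        Finset.sum_le_sum (fun r hr => hvmax r (hRL hr))
      _ = (12 - m) * m := by rw [Finset.sum_const, hRcard, smul_eq_mul]
  have hsplitL : m + m * (12 - m) + ∑ r ∈ R, (NB r).card = 60 := by
    have h1 : ∑ z ∈ L, (NB z).card = (NB v).card + ∑ z ∈ L.erase v, (NB z).card :=
      (Finset.add_sum_erase L _ hvL).symm
    have h2 : L.erase v = (NB v) ∪ R := (Finset.union_sdiff_of_subset hBsub).symm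
    have h3 : Disjoint (NB v) R := Finset.disjoint_sdiff
    have h4 : ∑ u ∈ (NB v), (NB u).card = m * (12 - m) := by
      rw [Finset.sum_congr rfl hBdb, Finset.sum_const, hBcard, smul_eq_mul]
    rw [sumdb, hmdef, h2, Finset.sum_union h3, h4] at h1
    omega
  -- final case analysis on m
  have hm9 : m = 9 := by
    interval_cases m <;> omega
  subst hm9
  -- the m = 9 case
  have hs24 : ∑ r ∈ R, (NB r).card = 24 := by omega
  have hub : ∀ r ∈ R, (NB r).card ≤ 9 := fun r hr => hvmax r (hRL hr)
  have hR3 : R.card = 3 := by rw [hRcard]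
  have hlb : ∀ r ∈ R, 6 ≤ (NB r).card := by
    intro r hr
    have h1 : ∑ z ∈ R.erase r, (NB z).card ≤ 18 := by
      calc ∑ z ∈ R.erase r, (NB z).card ≤ ∑ z ∈ R.erase r, 9 :=
          Finset.sum_le_sum (fun z hz => hub z (Finset.mem_of_mem_erase hz))
        _ = 18 := by rw [Finset.sum_const, Finset.card_erase_of_mem hr, hR3, smul_eq_mul]
    have h2 : (NB r).card + ∑ z ∈ R.erase r, (NB z).card = ∑ z ∈ R, (NB z).card :=
      Finset.add_sum_erase R (fun z => (NB z).card) hr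
    omega
  have hdichot : ∀ r ∈ R, (NB r).card = 9 ∨
      ∃ w ∈ R, w ≠ r ∧ (NB r).card = 6 ∧ (NB w).card = 6 := by
    intro r hr
    have h6 := hlb r hr
    obtain ⟨w, hw⟩ : (NB r).Nonempty := by rw [← Finset.card_pos]; omega
    obtain ⟨hwL, hwne, hwnadj⟩ := (memNB r w).mp hw
    have hedge_rw := hedge r (hRL hr) w hw
    by_cases hwv : w = v
    · subst hwv
      omega
    · by_cases hwB : w ∈ (NB v)
      · left
        have := hBdb w hwB
        omega
      · right
        have hwR : w ∈ R := by
          rw [hR, Finset.mem_sdiff]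
          exact ⟨Finset.mem_erase.mpr ⟨hwv, hwL⟩, hwB⟩
        have h6w := hlb w hwR
        exact ⟨w, hwR, hwne, by omega, by omega⟩
  by_cases hall : ∀ r ∈ R, (NB r).card = 9
  · have : ∑ r ∈ R, (NB r).card = 27 := by
      rw [Finset.sum_congr rfl hall, Finset.sum_const, hR3, smul_eq_mul]
    omega
  · push_neg at hall
    obtain ⟨r, hr, hr9⟩ := hall
    rcases hdichot r hr with h9 | ⟨w, hwR, hwne, h6r, h6w⟩
    · exact hr9 h9
    · have hrw : w ∈ R.erase r := Finset.mem_erase.mpr ⟨hwne, hwR⟩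
      have h1 : (NB r).card + ∑ z ∈ R.erase r, (NB z).card = ∑ z ∈ R, (NB z).card :=
        Finset.add_sum_erase R (fun z => (NB z).card) hr
      have h2 : (NB w).card + ∑ z ∈ (R.erase r).erase w, (NB z).card
          = ∑ z ∈ R.erase r, (NB z).card :=
        Finset.add_sum_erase (R.erase r) (fun z => (NB z).card) hrw
      have h3 : ∑ z ∈ (R.erase r).erase w, (NB z).card ≤ 9 := by
        calc ∑ z ∈ (R.erase r).erase w, (NB z).card
            ≤ ∑ z ∈ (R.erase r).erase w, 9 :=
              Finset.sum_le_sum (fun z hz => hub z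
                (Finset.mem_of_mem_erase (Finset.mem_of_mem_erase hz)))
          _ = ((R.erase r).erase w).card * 9 := by rw [Finset.sum_const, smul_eq_mul]
          _ ≤ 9 := by
              rw [Finset.card_erase_of_mem hrw, Finset.card_erase_of_mem hr, hR3]
      omega

end Graph

end DRG44

/-- There is no distance-regular graph with intersection array `{44, 30, 5; 1, 3, 40}`. -/
theorem stmt2 (V : Type*) [Fintype V] (G : SimpleGraph V) :
    ¬ IsDRG G 3
      (fun i => if i = 0 then 44 else if i = 1 then 30 else if i = 2 then 5 else 0)
      (fun i => if i = 1 then 1 else if i = 2 then 3 else if i = 3 then 40 else 0)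
      (fun i => if i = 1 then 13 else if i = 2 then 36 else if i = 3 then 4 else 0) := by
  intro h
  classical
  -- conversion of the set-based cardinalities to finset ones
  have hset : ∀ x y : V, Nat.card {z : V | G.Adj y z ∧ G.dist x z = 1}
      = (G.neighborFinset y ∩ G.neighborFinset x).card := by
    intro x y
    rw [Nat.card_eq_fintype_card, Fintype.card_subtype]
    congr 1
    ext z
    simp [SimpleGraph.dist_eq_one_iff_adj]
  -- degree 44
  have hdeg : ∀ v : V, (G.neighborFinset v).card = 44 := by
    intro v
    have hb := h.card_b 0 (by norm_num) v v (SimpleGraph.dist_self (G := G))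
    simp only [show (0:ℕ) + 1 = 1 from rfl] at hb
    rw [hset v v, Finset.inter_self] at hb
    simpa using hb
  -- lambda = 13
  have hlam : ∀ x y : V, G.Adj x y →
      (G.neighborFinset x ∩ G.neighborFinset y).card = 13 := by
    intro x y hxy
    have ha := h.card_a 1 (by norm_num) x y (SimpleGraph.dist_eq_one_iff_adj.mpr hxy)
    rw [hset x y] at ha
    rw [Finset.inter_comm]
    simpa using ha
  -- mu = 3
  have hmu : ∀ x y : V, x ≠ y → ¬ G.Adj x y → ∀ p, G.Adj x p → G.Adj p y →
      (G.neighborFinset x ∩ G.neighborFinset y).card = 3 := by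
    intro x y hne hnadj p hxp hpy
    have hd2 : G.dist x y = 2 := by
      have hpos : 0 < G.dist x y := h.connected.pos_dist_of_ne hne
      have hle : G.dist x y ≤ 2 := by
        have := SimpleGraph.dist_le (SimpleGraph.Walk.cons hxp
          (SimpleGraph.Walk.cons hpy SimpleGraph.Walk.nil))
        simpa using this
      have hne1 : G.dist x y ≠ 1 := fun hc =>
        hnadj (SimpleGraph.dist_eq_one_iff_adj.mp hc)
      omega
    have hc := h.card_c 2 (by norm_num) x y hd2
    simp only [show (2:ℕ) - 1 = 1 from rfl] at hc
    rw [hset x y] at hc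
    rw [Finset.inter_comm]
    simpa using hc
  -- an edge exists
  obtain ⟨x0, _, _⟩ := h.exists_diam
  have hne : (G.neighborFinset x0).Nonempty := by
    rw [← Finset.card_pos, hdeg x0]; omega
  obtain ⟨y1, hy1⟩ := hne
  exact DRG44.no_edge hdeg hlam hmu (DRG44.memN.mp hy1)
end

section
/- There is no distance-regular graph with intersection array {65, 44, 11; 1, 4, 55}. -/
open Finset SimpleGraph

private lemma natCard_setOf' {V : Type*} [Fintype V] (p : V → Prop) [DecidablePred p] :
    Nat.card {z : V | p z} = (Finset.univ.filter p).card := by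
  rw [Nat.card_eq_fintype_card]
  simp [Fintype.card_subtype]

/-- There is no distance-regular graph with intersection array `{65, 44, 11; 1, 4, 55}`. -/
theorem stmt3 (V : Type*) [Fintype V] (G : SimpleGraph V) :
    ¬ IsDRG G 3
      (fun i => if i = 0 then 65 else if i = 1 then 44 else if i = 2 then 11 else 0)
      (fun i => if i = 1 then 1 else if i = 2 then 4 else if i = 3 then 55 else 0)
      (fun i => if i = 1 then 20 else if i = 2 then 50 else if i = 3 then 10 else 0) := by
  classical
  intro h
  obtain ⟨x, -, -⟩ := h.exists_diam
  -- valency is 65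
  have hk : ∀ v : V, (G.neighborFinset v).card = 65 := by
    intro v
    have hb := h.card_b 0 (by norm_num) v v (SimpleGraph.dist_self)
    rw [natCard_setOf'] at hb
    norm_num at hb
    rw [← hb]
    congr 1
    ext z
    simp [mem_neighborFinset]
  -- a₁ = 20 : adjacent vertices have 20 common neighbours
  have hA : ∀ u v : V, G.Adj u v →
      (G.neighborFinset u ∩ G.neighborFinset v).card = 20 := by
    intro u v huv
    have ha := h.card_a 1 (by norm_num) u v (SimpleGraph.dist_eq_one_iff_adj.mpr huv)
    rw [natCard_setOf'] at ha
    norm_num at ha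
    rw [← ha]
    congr 1
    ext z
    simp only [mem_inter, mem_neighborFinset, mem_filter, mem_univ, true_and]
    tauto
  -- c₂ = 4 : vertices at distance 2 have 4 common neighbours
  have hC : ∀ u v : V, G.dist u v = 2 →
      (G.neighborFinset u ∩ G.neighborFinset v).card = 4 := by
    intro u v huv
    have hc := h.card_c 2 (by norm_num) u v huv
    rw [natCard_setOf'] at hc
    norm_num at hc
    rw [← hc]
    congr 1
    ext z
    simp only [mem_inter, mem_neighborFinset, mem_filter, mem_univ, true_and]
    tauto
  -- distance 2 for distinct non-adjacent neighbours of x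
  have hdist2 : ∀ u v : V, u ∈ G.neighborFinset x → v ∈ G.neighborFinset x →
      u ≠ v → ¬G.Adj u v → G.dist u v = 2 := by
    intro u v hu hv hne hnadj
    rw [mem_neighborFinset] at hu hv
    have h1 : G.dist u x = 1 := SimpleGraph.dist_eq_one_iff_adj.mpr hu.symm
    have h2 : G.dist x v = 1 := SimpleGraph.dist_eq_one_iff_adj.mpr hv
    have hle : G.dist u v ≤ 2 := by
      calc G.dist u v ≤ G.dist u x + G.dist x v := h.connected.dist_triangle
        _ = 2 := by rw [h1, h2]
    have h0 : G.dist u v ≠ 0 := fun hz => hne (h.connected.dist_eq_zero_iff.mp hz)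
    have h1' : G.dist u v ≠ 1 := fun hz =>
      hnadj (SimpleGraph.dist_eq_one_iff_adj.mp hz)
    omega
  -- the "closed neighbourhood in N(x)" sets
  have hSsub : ∀ y, y ∈ G.neighborFinset x →
      (G.neighborFinset x ∩ G.neighborFinset y) ∪ {y} ⊆ G.neighborFinset x := by
    intro y hy
    apply Finset.union_subset Finset.inter_subset_left
    simpa using hy
  have hScard : ∀ y, y ∈ G.neighborFinset x →
      ((G.neighborFinset x ∩ G.neighborFinset y) ∪ {y}).card = 21 := by
    intro y hy
    rw [Finset.card_union_of_disjoint, hA x y (by simpa using hy),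
      Finset.card_singleton]
    simp [Finset.disjoint_singleton_right]
  -- extracting membership info
  have hnotS : ∀ y z : V, z ∈ G.neighborFinset x →
      z ∉ (G.neighborFinset x ∩ G.neighborFinset y) ∪ {y} →
      z ≠ y ∧ ¬G.Adj y z := by
    intro y z hz hzS
    simp only [Finset.mem_union, Finset.mem_inter, Finset.mem_singleton, not_or,
      not_and] at hzS
    obtain ⟨h1, h2⟩ := hzS
    exact ⟨h2, fun hadj => (h1 hz) ((mem_neighborFinset _ _ _).mpr hadj)⟩
  -- pairwise intersections are small
  have hpair : ∀ y z : V, y ∈ G.neighborFinset x → z ∈ G.neighborFinset x →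
      y ≠ z → ¬G.Adj y z →
      (((G.neighborFinset x ∩ G.neighborFinset y) ∪ {y}) ∩
        ((G.neighborFinset x ∩ G.neighborFinset z) ∪ {z})).card ≤ 3 := by
    intro y z hy hz hne hnadj
    have hd2 := hdist2 y z hy hz hne hnadj
    have h4 := hC y z hd2
    have hxmem : x ∈ G.neighborFinset y ∩ G.neighborFinset z := by
      rw [mem_neighborFinset] at hy hz
      simp [mem_neighborFinset, hy.symm, hz.symm]
    have hsub : ((G.neighborFinset x ∩ G.neighborFinset y) ∪ {y}) ∩
        ((G.neighborFinset x ∩ G.neighborFinset z) ∪ {z}) ⊆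
        (G.neighborFinset y ∩ G.neighborFinset z).erase x := by
      intro u hu
      simp only [Finset.mem_inter, Finset.mem_union, Finset.mem_singleton] at hu
      obtain ⟨hu1, hu2⟩ := hu
      rcases hu1 with hu1 | rfl
      · rcases hu2 with hu2 | rfl
        · rw [Finset.mem_erase]
          refine ⟨fun heq => ?_, Finset.mem_inter.mpr ⟨hu1.2, hu2.2⟩⟩
          rw [heq] at hu1
          have hxx : G.Adj x x := by simpa using hu1.1
          exact G.irrefl hxx
        · have hyu : G.Adj y u := by simpa using hu1.2
          exact absurd hyu hnadj
      · rcases hu2 with hu2 | rfl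
        · have hzu : G.Adj z u := by simpa using hu2.2
          exact absurd hzu.symm hnadj
        · exact absurd rfl hne
    calc _ ≤ ((G.neighborFinset y ∩ G.neighborFinset z).erase x).card :=
          Finset.card_le_card hsub
      _ = 4 - 1 := by rw [Finset.card_erase_of_mem hxmem, h4]
      _ ≤ 3 := by norm_num
  -- pick four pairwise non-adjacent vertices in N(x) greedily
  have hkx : (G.neighborFinset x).card = 65 := hk x
  obtain ⟨y1, hy1⟩ := (Finset.card_pos (s := G.neighborFinset x)).mp (by rw [hkx]; norm_num)
  set S1 := (G.neighborFinset x ∩ G.neighborFinset y1) ∪ {y1} with hS1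
  have hS1c : S1.card = 21 := hScard y1 hy1
  obtain ⟨y2, hy2'⟩ : (G.neighborFinset x \ S1).Nonempty := by
    rw [← Finset.card_pos]
    have := Finset.le_card_sdiff S1 (G.neighborFinset x)
    omega
  rw [Finset.mem_sdiff] at hy2'
  obtain ⟨hy2, hy2S1⟩ := hy2'
  set S2 := (G.neighborFinset x ∩ G.neighborFinset y2) ∪ {y2} with hS2
  have hS2c : S2.card = 21 := hScard y2 hy2
  obtain ⟨y3, hy3'⟩ : (G.neighborFinset x \ (S1 ∪ S2)).Nonempty := by
    rw [← Finset.card_pos]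
    have h1 := Finset.le_card_sdiff (S1 ∪ S2) (G.neighborFinset x)
    have h2 := Finset.card_union_le S1 S2
    omega
  rw [Finset.mem_sdiff, Finset.mem_union, not_or] at hy3'
  obtain ⟨hy3, hy3S1, hy3S2⟩ := hy3'
  set S3 := (G.neighborFinset x ∩ G.neighborFinset y3) ∪ {y3} with hS3
  have hS3c : S3.card = 21 := hScard y3 hy3
  obtain ⟨y4, hy4'⟩ : (G.neighborFinset x \ (S1 ∪ S2 ∪ S3)).Nonempty := by
    rw [← Finset.card_pos]
    have h1 := Finset.le_card_sdiff (S1 ∪ S2 ∪ S3) (G.neighborFinset x)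
    have h2 := Finset.card_union_le S1 S2
    have h3 := Finset.card_union_le (S1 ∪ S2) S3
    omega
  rw [Finset.mem_sdiff, Finset.mem_union, Finset.mem_union, not_or, not_or] at hy4'
  obtain ⟨hy4, ⟨hy4S1, hy4S2⟩, hy4S3⟩ := hy4'
  set S4 := (G.neighborFinset x ∩ G.neighborFinset y4) ∪ {y4} with hS4
  have hS4c : S4.card = 21 := hScard y4 hy4
  -- nonadjacency facts
  obtain ⟨hne21, hna12⟩ := hnotS y1 y2 hy2 hy2S1
  obtain ⟨hne31, hna13⟩ := hnotS y1 y3 hy3 hy3S1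
  obtain ⟨hne32, hna23⟩ := hnotS y2 y3 hy3 hy3S2
  obtain ⟨hne41, hna14⟩ := hnotS y1 y4 hy4 hy4S1
  obtain ⟨hne42, hna24⟩ := hnotS y2 y4 hy4 hy4S2
  obtain ⟨hne43, hna34⟩ := hnotS y3 y4 hy4 hy4S3
  -- pairwise intersection bounds
  have c12 := hpair y1 y2 hy1 hy2 (Ne.symm hne21) hna12
  have c13 := hpair y1 y3 hy1 hy3 (Ne.symm hne31) hna13
  have c14 := hpair y1 y4 hy1 hy4 (Ne.symm hne41) hna14
  have c23 := hpair y2 y3 hy2 hy3 (Ne.symm hne32) hna23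
  have c24 := hpair y2 y4 hy2 hy4 (Ne.symm hne42) hna24
  have c34 := hpair y3 y4 hy3 hy4 (Ne.symm hne43) hna34
  rw [← hS1, ← hS2] at c12
  rw [← hS1, ← hS3] at c13
  rw [← hS1, ← hS4] at c14
  rw [← hS2, ← hS3] at c23
  rw [← hS2, ← hS4] at c24
  rw [← hS3, ← hS4] at c34
  -- counting
  have hU : (S1 ∪ S2 ∪ S3 ∪ S4).card ≤ 65 := by
    rw [← hkx]
    apply Finset.card_le_card
    apply Finset.union_subset (Finset.union_subset (Finset.union_subset _ _) _) _
    exacts [hSsub y1 hy1, hSsub y2 hy2, hSsub y3 hy3, hSsub y4 hy4]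
  have u2 := Finset.card_union_add_card_inter S1 S2
  have u3 := Finset.card_union_add_card_inter (S1 ∪ S2) S3
  have u4 := Finset.card_union_add_card_inter (S1 ∪ S2 ∪ S3) S4
  have i3 : ((S1 ∪ S2) ∩ S3).card ≤ (S1 ∩ S3).card + (S2 ∩ S3).card := by
    rw [Finset.union_inter_distrib_right]
    exact Finset.card_union_le _ _
  have i4 : ((S1 ∪ S2 ∪ S3) ∩ S4).card ≤
      (S1 ∩ S4).card + (S2 ∩ S4).card + (S3 ∩ S4).card := by
    rw [Finset.union_inter_distrib_right, Finset.union_inter_distrib_right]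
    exact le_trans (Finset.card_union_le _ _)
      (Nat.add_le_add_right (Finset.card_union_le _ _) _)
  omega
end

section
/- Let Γ be a distance-regular graph with valency k and diameter 3. Then the second largest eigenvalue θ₁ of the adjacency matrix of Γ satisfies θ₁ ≥ min{(a₁ + √(a₁² + 4k))/2, a₃}. -/
open Finset SimpleGraph

/-- `θ` is an eigenvalue of the adjacency matrix of `G`. -/
def IsEig {V : Type*} [Fintype V] [DecidableEq V] (G : SimpleGraph V)
    [DecidableRel G.Adj] (θ : ℝ) : Prop :=
  ∃ v : V → ℝ, v ≠ 0 ∧ (G.adjMatrix ℝ).mulVec v = θ • v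

/-- `θ` is the second largest eigenvalue of `G` (`k` being the largest). -/
def IsSecondLargestEig {V : Type*} [Fintype V] [DecidableEq V] (G : SimpleGraph V)
    [DecidableRel G.Adj] (k θ : ℝ) : Prop :=
  IsEig G θ ∧ θ < k ∧ ∀ η : ℝ, IsEig G η → η ≠ k → η ≤ θ

/-- `θ` is the smallest eigenvalue of `G`. -/
def IsSmallestEig {V : Type*} [Fintype V] [DecidableEq V] (G : SimpleGraph V)
    [DecidableRel G.Adj] (θ : ℝ) : Prop :=
  IsEig G θ ∧ ∀ η : ℝ, IsEig G η → θ ≤ η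

/-- The multiplicity of `θ` as an eigenvalue of the adjacency matrix of `G`. -/
noncomputable def eigMult {V : Type*} [Fintype V] [DecidableEq V] (G : SimpleGraph V)
    [DecidableRel G.Adj] (θ : ℝ) : ℕ :=
  Module.finrank ℝ ↥(Module.End.eigenspace (Matrix.toLin' (G.adjMatrix ℝ)) θ)

/-!
Pick a vertex `x` of eccentricity `3`. On `{x} ∪ Γ(x)` the vector equal to `k` at `x` and
to `μ = (a₁ + √(a₁² + 4k))/2` on `Γ(x)` satisfies `A u = μ u` there (because `μ² = a₁ μ + k`),
and the indicator of `Γ₃(x)` satisfies `A u = a₃ u` on `Γ₃(x)`; since no edge joins `Γ(x)` to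
`Γ₃(x)`, both are eigenvectors, with disjoint supports, of the subgraph induced on
`{x} ∪ Γ(x) ∪ Γ₃(x)`. A combination
of them orthogonal to the all-ones vector therefore has Rayleigh quotient at least `min μ a₃`. In a
connected `k`-regular graph the all-ones vector spans the `k`-eigenspace, so on its orthogonal
complement the Rayleigh quotient is at most `θ₁`.
-/

open Matrix

theorem Matrix.IsHermitian.dotProduct_mulVec_le_of_orthogonal {n : Type*} [Fintype n]
    [DecidableEq n] {A : Matrix n n ℝ} (hA : A.IsHermitian) {θ : ℝ} {v : n → ℝ}
    (hv : ∀ (η : ℝ) (w : n → ℝ), A *ᵥ w = η • w → θ < η → w ⬝ᵥ v = 0) :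
    v ⬝ᵥ (A *ᵥ v) ≤ θ * (v ⬝ᵥ v) := by
  set B := hA.eigenvectorBasis
  have parseval (x y : n → ℝ) : x ⬝ᵥ y = ∑ i, (B i ⬝ᵥ x) * (B i ⬝ᵥ y) := by
    have h := B.sum_inner_mul_inner (WithLp.toLp 2 x) (WithLp.toLp 2 y)
    simp only [EuclideanSpace.inner_eq_star_dotProduct, star_trivial] at h
    rw [dotProduct_comm, ← h]
    simp only [dotProduct_comm y]
  have hBA (i : n) : B i ⬝ᵥ (A *ᵥ v) = hA.eigenvalues i * (B i ⬝ᵥ v) := by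
    rw [dotProduct_mulVec, ← mulVec_transpose, ← conjTranspose_eq_transpose_of_trivial, hA.eq,
      hA.mulVec_eigenvectorBasis, smul_dotProduct, smul_eq_mul]
  rw [parseval, parseval v v, Finset.mul_sum]
  refine Finset.sum_le_sum fun i _ => ?_
  rw [hBA]
  rcases le_or_gt (hA.eigenvalues i) θ with hle | hlt
  · nlinarith [mul_self_nonneg (B i ⬝ᵥ v)]
  · rw [show B i ⬝ᵥ v = 0 from hv _ _ (hA.mulVec_eigenvectorBasis i) hlt]
    simp

/-- The interlacing step: `u₁`, `u₂` are eigenvectors of the principal submatrix `A[S, S]` with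
disjoint supports. -/
theorem Matrix.min_mul_dotProduct_le_dotProduct_mulVec {n : Type*} [Fintype n]
    (A : Matrix n n ℝ) (S : Set n) {u₁ u₂ : n → ℝ} {μ₁ μ₂ : ℝ}
    (hu₁ : ∀ z ∉ S, u₁ z = 0) (hu₂ : ∀ z ∉ S, u₂ z = 0) (hdisj : ∀ z, u₁ z = 0 ∨ u₂ z = 0)
    (hA₁ : ∀ z ∈ S, (A *ᵥ u₁) z = μ₁ * u₁ z) (hA₂ : ∀ z ∈ S, (A *ᵥ u₂) z = μ₂ * u₂ z)
    (α β : ℝ) :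
    min μ₁ μ₂ * ((α • u₁ + β • u₂) ⬝ᵥ (α • u₁ + β • u₂)) ≤
      (α • u₁ + β • u₂) ⬝ᵥ (A *ᵥ (α • u₁ + β • u₂)) := by
  rw [dotProduct, dotProduct, Finset.mul_sum]
  refine Finset.sum_le_sum fun z _ => ?_
  simp only [mulVec_add, mulVec_smul, Pi.add_apply, Pi.smul_apply, smul_eq_mul]
  by_cases hz : z ∈ S
  · rw [hA₁ z hz, hA₂ z hz]
    rcases hdisj z with h | h <;> simp only [h, mul_zero, zero_add, add_zero]
    · nlinarith [min_le_right μ₁ μ₂, mul_self_nonneg (β * u₂ z)]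
    · nlinarith [min_le_left μ₁ μ₂, mul_self_nonneg (α * u₁ z)]
  · simp [hu₁ z hz, hu₂ z hz]

namespace SimpleGraph

variable {V : Type*} [Fintype V] {G : SimpleGraph V}

noncomputable def distIndicator (G : SimpleGraph V) (x : V) (i : ℕ) : V → ℝ :=
  fun z => if G.dist x z = i then 1 else 0

theorem sum_distIndicator (x : V) (i : ℕ) :
    ∑ z, G.distIndicator x i z = #{z | G.dist x z = i} := by
  simp only [distIndicator, Finset.sum_boole]

/-- When `μ ^ 2 = a₁ μ + k`, this is a Perron vector of the subgraph of a distance-regular graph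
induced on `{x} ∪ Γ(x)`. -/
noncomputable def ballVector [DecidableEq V] (G : SimpleGraph V) (x : V) (k μ : ℝ) : V → ℝ :=
  k • Pi.single x 1 + μ • G.distIndicator x 1

variable [DecidableRel G.Adj]

theorem Connected.eq_of_adjMatrix_mulVec_eq_smul [DecidableEq V] {k : ℕ} (hc : G.Connected)
    (hreg : G.IsRegularOfDegree k) {v : V → ℝ} (hv : G.adjMatrix ℝ *ᵥ v = (k : ℝ) • v)
    (x y : V) : v x = v y := by
  have hL : G.lapMatrix ℝ *ᵥ v = 0 := by
    ext z
    rw [lapMatrix_mulVec_apply, ← adjMatrix_mulVec_apply G z v, hv, hreg z]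
    simp
  exact (lapMatrix_mulVec_eq_zero_iff_forall_reachable G).1 hL x y (hc x y)

theorem dotProduct_adjMatrix_mulVec_le_of_sum_eq_zero [DecidableEq V] {k : ℕ} (hc : G.Connected)
    (hreg : G.IsRegularOfDegree k) {θ : ℝ} (hθ : ∀ η : ℝ, IsEig G η → η ≠ k → η ≤ θ)
    {v : V → ℝ} (hv : ∑ z, v z = 0) :
    v ⬝ᵥ (G.adjMatrix ℝ *ᵥ v) ≤ θ * (v ⬝ᵥ v) := by
  refine (G.isHermitian_adjMatrix ℝ).dotProduct_mulVec_le_of_orthogonal fun η w hw hlt => ?_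
  by_cases hw0 : w = 0
  · simp [hw0]
  obtain rfl : η = k := by
    by_contra hne
    exact (hθ η ⟨w, hw0, hw⟩ hne).not_gt hlt
  obtain ⟨z₀⟩ := hc.nonempty
  have hconst (z : V) : w z = w z₀ := hc.eq_of_adjMatrix_mulVec_eq_smul hreg hw z z₀
  simp only [dotProduct, hconst, ← Finset.mul_sum, hv, mul_zero]

theorem card_neighborFinset_filter_dist_eq_zero {x z : V} {i : ℕ}
    (hi : i + 2 ≤ G.dist x z ∨ G.dist x z + 2 ≤ i) :
    #{w ∈ G.neighborFinset z | G.dist x w = i} = 0 := by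
  refine Finset.card_eq_zero.2 (Finset.filter_eq_empty_iff.2 fun w hw hwi => ?_)
  rcases (G.mem_neighborFinset z w |>.1 hw).diff_dist_adj (u := x) with h | h | h <;> omega

theorem adjMatrix_mulVec_distIndicator (x : V) (i : ℕ) (z : V) :
    (G.adjMatrix ℝ *ᵥ G.distIndicator x i) z = #{w ∈ G.neighborFinset z | G.dist x w = i} := by
  simp only [adjMatrix_mulVec_apply, distIndicator, Finset.sum_boole]

end SimpleGraph

namespace IsDRG

variable {V : Type*} [Fintype V] {G : SimpleGraph V} [DecidableRel G.Adj] {D : ℕ} {b c a : ℕ → ℕ}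

theorem isRegularOfDegree (hG : IsDRG G D b c a) : G.IsRegularOfDegree (b 0) := by
  intro z
  have h := hG.card_b 0 (Nat.zero_le D) z z G.dist_self
  rw [← card_neighborFinset_eq_degree, ← h, Nat.card_eq_fintype_card, Fintype.card_subtype]
  congr 1
  ext w
  simp

theorem card_filter_adj (hG : IsDRG G D b c a) (x : V) : #{z | G.Adj x z} = b 0 := by
  rw [← hG.isRegularOfDegree x, ← card_neighborFinset_eq_degree, neighborFinset_eq_filter]

theorem card_neighborFinset_filter_dist (hG : IsDRG G D b c a) {x z : V} {i : ℕ} (hi : i ≤ D)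
    (hz : G.dist x z = i) : #{w ∈ G.neighborFinset z | G.dist x w = i} = a i := by
  rw [← hG.card_a i hi x z hz, Nat.card_eq_fintype_card, Fintype.card_subtype]
  congr 1
  ext w
  simp

theorem adjMatrix_mulVec_distIndicator_diam (hG : IsDRG G D b c a) (x : V) {z : V}
    (hz : G.dist x z ≠ D - 1) :
    (G.adjMatrix ℝ *ᵥ G.distIndicator x D) z = a D * G.distIndicator x D z := by
  rw [adjMatrix_mulVec_distIndicator]
  by_cases h : G.dist x z = D
  · simp [hG.card_neighborFinset_filter_dist le_rfl h, distIndicator, h]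
  · have := hG.le_diam x z
    rw [card_neighborFinset_filter_dist_eq_zero (by omega)]
    simp [distIndicator, h]

theorem adjMatrix_mulVec_ballVector [DecidableEq V] (hG : IsDRG G D b c a) (hD : 1 ≤ D) {μ : ℝ}
    (hμ : μ ^ 2 = a 1 * μ + b 0) (x : V) {z : V} (hz : G.dist x z ≠ 2) :
    (G.adjMatrix ℝ *ᵥ G.ballVector x (b 0) μ) z = μ * G.ballVector x (b 0) μ z := by
  simp only [ballVector, mulVec_add, mulVec_smul, mulVec_single_one, Pi.add_apply,
    Pi.smul_apply, smul_eq_mul, adjMatrix_mulVec_distIndicator, col_apply, adjMatrix_apply]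
  obtain h | h | h : G.dist x z = 0 ∨ G.dist x z = 1 ∨ 3 ≤ G.dist x z := by omega
  · obtain rfl := (hG.connected.dist_eq_zero_iff).1 h
    simp [distIndicator, neighborFinset_eq_filter, Finset.filter_filter, hG.card_filter_adj x]
  · have hxz : G.Adj x z := dist_eq_one_iff_adj.1 h
    rw [hG.card_neighborFinset_filter_dist hD h]
    simp [hxz.symm, hxz.ne', distIndicator, h]
    linear_combination -hμ
  · have hxz : x ≠ z := by
      rintro rfl
      simp at h
    have hnadj : ¬G.Adj z x := fun hzx => by simp [dist_eq_one_iff_adj.2 hzx.symm] at h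
    rw [card_neighborFinset_filter_dist_eq_zero (by omega)]
    simp [hnadj, hxz.symm, distIndicator, show G.dist x z ≠ 1 by omega]

theorem sum_ballVector [DecidableEq V] (hG : IsDRG G D b c a) (x : V) (μ : ℝ) :
    ∑ z, G.ballVector x (b 0) μ z = b 0 + μ * b 0 := by
  simp [ballVector, Finset.sum_add_distrib, ← Finset.mul_sum, sum_distIndicator,
    hG.card_filter_adj x]

theorem exists_sum_eq_zero_min_mul_le [DecidableEq V] (hG : IsDRG G D b c a) (hD : 3 ≤ D)
    {μ : ℝ} (hμ : μ ^ 2 = a 1 * μ + b 0) :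
    ∃ v : V → ℝ, v ≠ 0 ∧ ∑ z, v z = 0 ∧
      min μ (a D) * (v ⬝ᵥ v) ≤ v ⬝ᵥ (G.adjMatrix ℝ *ᵥ v) := by
  obtain ⟨x, y, hxy⟩ := hG.exists_diam
  set u₁ := G.ballVector x (b 0) μ
  set u₂ := G.distIndicator x D
  set m : ℕ := #{z | G.dist x z = D}
  have hm : 0 < m := Finset.card_pos.2 ⟨y, by simp [hxy]⟩
  have hk : 0 < b 0 := hG.isRegularOfDegree x ▸
    (hG.connected x y).degree_pos_left (by rintro rfl; simp at hxy; omega)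
  have hu₁ {z : V} (hz : 2 ≤ G.dist x z) : u₁ z = 0 := by
    have hzx : z ≠ x := by rintro rfl; simp at hz
    simp [u₁, ballVector, distIndicator, hzx, show G.dist x z ≠ 1 by omega]
  have hu₂ {z : V} (hz : G.dist x z ≠ D) : u₂ z = 0 := by simp [u₂, distIndicator, hz]
  set S : Set V := {z | G.dist x z ≤ 1 ∨ G.dist x z = D}
  have hlower := min_mul_dotProduct_le_dotProduct_mulVec (G.adjMatrix ℝ) S
    (fun z hz => hu₁ (by simp [S] at hz; omega)) (fun z hz => hu₂ (by simp [S] at hz; omega))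
    (fun z => (em (G.dist x z = D)).imp (fun h => hu₁ (by omega)) hu₂)
    (fun z hz => hG.adjMatrix_mulVec_ballVector (by omega) hμ x (by simp [S] at hz; omega))
    (fun z hz => hG.adjMatrix_mulVec_distIndicator_diam x (by simp [S] at hz; omega))
    m (-(b 0 * (1 + μ)))
  refine ⟨_, ?_, ?_, hlower⟩
  · intro hv
    have hvx := congrFun hv x
    simp [u₁, u₂, ballVector, distIndicator, show 0 ≠ D by omega] at hvx
    omega
  · simp only [Pi.add_apply, Pi.smul_apply, smul_eq_mul, Finset.sum_add_distrib, ← Finset.mul_sum,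
      u₁, hG.sum_ballVector, u₂, sum_distIndicator, m]
    ring

end IsDRG

/-- The second largest eigenvalue of a distance-regular graph with diameter `3`
is at least `min{(a₁ + √(a₁² + 4k))/2, a₃}`. -/
theorem stmt4 {V : Type*} [Fintype V] [DecidableEq V] (G : SimpleGraph V)
    [DecidableRel G.Adj] (b c a : ℕ → ℕ) (hG : IsDRG G 3 b c a)
    (θ1 : ℝ) (hθ1 : IsSecondLargestEig G (b 0) θ1) :
    θ1 ≥ min (((a 1 : ℝ) + Real.sqrt ((a 1 : ℝ) ^ 2 + 4 * b 0)) / 2) ((a 3 : ℝ)) := by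
  set μ := ((a 1 : ℝ) + Real.sqrt ((a 1 : ℝ) ^ 2 + 4 * b 0)) / 2
  have hμ : μ ^ 2 = a 1 * μ + b 0 := by
    have := Real.sq_sqrt (by positivity : (0 : ℝ) ≤ (a 1 : ℝ) ^ 2 + 4 * b 0)
    linear_combination this / 4
  obtain ⟨v, hv, hsum, hlower⟩ := hG.exists_sum_eq_zero_min_mul_le le_rfl hμ
  have hupper := dotProduct_adjMatrix_mulVec_le_of_sum_eq_zero hG.connected hG.isRegularOfDegree
    hθ1.2.2 hsum
  have hpos : 0 < v ⬝ᵥ v := by simpa using dotProduct_star_self_pos_iff.2 hv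
  exact le_of_mul_le_mul_right (hlower.trans hupper) hpos
end

section
/- Let Γ be a distance-regular graph with valency k and diameter 3, and let θ be an eigenvalue of Γ with standard sequence u₀ = 1, u₁ = θ/k, u₂, u₃. Then the following are equivalent: (i) u₂ = 0; (ii) θ = a₃; (iii) θ = (a₁ + √(a₁² + 4k))/2. -/
open Finset SimpleGraph

lemma stmt5_alg (K a1 a3 θ u1 u2 u3 b1 b2 c2 c3 a2 : ℝ)
    (hK : 1 ≤ K) (hb1 : 1 ≤ b1) (hc2 : 1 ≤ c2) (hc3 : 1 ≤ c3)
    (ha1 : 0 ≤ a1) (ha3 : 0 ≤ a3)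
    (hu1 : u1 = θ / K)
    (hrec1 : 1 + a1 * u1 + b1 * u2 = θ * u1)
    (hrec2 : c2 * u1 + a2 * u2 + b2 * u3 = θ * u2)
    (hrec3 : c3 * u2 + a3 * u3 = θ * u3) :
    (u2 = 0 ↔ θ = a3) ∧ (u2 = 0 ↔ θ = (a1 + Real.sqrt (a1 ^ 2 + 4 * K)) / 2) := by
  have hK0 : K ≠ 0 := by linarith
  have hu1K : u1 * K = θ := by rw [hu1]; field_simp
  have h1 : (1 + a1 * u1 + b1 * u2) * K = θ * u1 * K := by rw [hrec1]
  have hquad : b1 * u2 * K = θ ^ 2 - a1 * θ - K := by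
    linear_combination h1 + (θ - a1) * hu1K
  have main : u2 = 0 ↔ θ = a3 := by
    constructor
    · intro h2
      have h3 : (a3 - θ) * u3 = 0 := by linear_combination hrec3 - c3 * h2
      rcases mul_eq_zero.mp h3 with h | h
      · linarith
      · exfalso
        have hu1z : u1 = 0 := by
          have hc : c2 * u1 = 0 := by
            linear_combination hrec2 - a2 * h2 - b2 * h + θ * h2
          rcases mul_eq_zero.mp hc with h' | h'
          · linarith
          · exact h'
        have hθ0 : θ = 0 := by rw [← hu1K, hu1z]; ring
        rw [hu1z, h2, hθ0] at hrec1
        simp at hrec1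
    · intro hθ3
      have h3 : c3 * u2 = 0 := by linear_combination hrec3 + u3 * hθ3
      rcases mul_eq_zero.mp h3 with h | h
      · linarith
      · exact h
  refine ⟨main, ?_, ?_⟩
  · intro h2
    have hθ3 : θ = a3 := main.mp h2
    have hθ0 : 0 ≤ θ := by rw [hθ3]; exact ha3
    have hq : θ ^ 2 = a1 * θ + K := by linear_combination b1 * K * h2 - hquad
    have hθa1 : a1 < θ := by nlinarith
    have hsq : a1 ^ 2 + 4 * K = (2 * θ - a1) ^ 2 := by nlinarith
    rw [hsq, Real.sqrt_sq (by linarith)]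
    ring
  · intro hform
    have hnn : (0 : ℝ) ≤ a1 ^ 2 + 4 * K := by positivity
    have hsq : Real.sqrt (a1 ^ 2 + 4 * K) ^ 2 = a1 ^ 2 + 4 * K := Real.sq_sqrt hnn
    have h2θ : 2 * θ - a1 = Real.sqrt (a1 ^ 2 + 4 * K) := by rw [hform]; ring
    have hq : θ ^ 2 - a1 * θ - K = 0 := by
      linear_combination ((2 * θ - a1 + Real.sqrt (a1 ^ 2 + 4 * K)) / 4) * h2θ + (1 / 4) * hsq
    have hz : u2 * (b1 * K) = 0 := by linear_combination hquad + hq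
    rcases mul_eq_zero.mp hz with h | h
    · exact h
    · exfalso; nlinarith

/-- For an eigenvalue `θ` of a distance-regular graph with diameter `3` and its standard
sequence `u₀ = 1, u₁ = θ/k, u₂, u₃`, the following are equivalent:
(i) `u₂ = 0`; (ii) `θ = a₃`; (iii) `θ = (a₁ + √(a₁² + 4k))/2`. -/
theorem stmt5 {V : Type*} [Fintype V] [DecidableEq V] (G : SimpleGraph V)
    [DecidableRel G.Adj] (b c a : ℕ → ℕ) (hG : IsDRG G 3 b c a)
    (θ : ℝ) (hθ : IsEig G θ) (u : ℕ → ℝ)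
    (hu0 : u 0 = 1) (hu1 : u 1 = θ / b 0)
    (hrec1 : (c 1 : ℝ) * u 0 + a 1 * u 1 + b 1 * u 2 = θ * u 1)
    (hrec2 : (c 2 : ℝ) * u 1 + a 2 * u 2 + b 2 * u 3 = θ * u 2)
    (hrec3 : (c 3 : ℝ) * u 2 + a 3 * u 3 = θ * u 3) :
    (u 2 = 0 ↔ θ = (a 3 : ℝ)) ∧
    (u 2 = 0 ↔ θ = ((a 1 : ℝ) + Real.sqrt ((a 1 : ℝ) ^ 2 + 4 * b 0)) / 2) := by
  classical
  obtain ⟨x, y, hxy⟩ := hG.exists_diam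
  obtain ⟨p, hp⟩ := hG.connected.exists_walk_length_eq_dist x y
  rw [hxy] at hp
  set p1 := p.getVert 1 with hp1def
  set p2 := p.getVert 2 with hp2def
  have hxp1 : G.Adj x p1 := by
    have := p.adj_getVert_succ (i := 0) (by omega)
    simpa using this
  have hp12 : G.Adj p1 p2 := p.adj_getVert_succ (by omega)
  have hp2y : G.Adj p2 y := by
    have := p.adj_getVert_succ (i := 2) (by omega)
    have h3 : p.getVert 3 = y := by rw [← hp]; exact p.getVert_length
    rwa [h3] at this
  have hdx1 : G.dist x p1 = 1 := dist_eq_one_iff_adj.mpr hxp1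
  have hd12 : G.dist p1 p2 = 1 := dist_eq_one_iff_adj.mpr hp12
  have hd2y : G.dist p2 y = 1 := dist_eq_one_iff_adj.mpr hp2y
  have htri1 := hG.connected.dist_triangle (u := x) (v := p1) (w := p2)
  have htri2 := hG.connected.dist_triangle (u := x) (v := p2) (w := y)
  have hdx2 : G.dist x p2 = 2 := by omega
  -- intersection number facts
  have hc1 : c 1 = 1 := by
    have h := hG.card_c 1 (by omega) x p1 hdx1
    have hset : {z : V | G.Adj p1 z ∧ G.dist x z = 1 - 1} = {x} := by
      ext z
      simp only [Set.mem_setOf_eq, Set.mem_singleton_iff]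
      constructor
      · rintro ⟨-, hz⟩
        exact ((hG.connected x z).dist_eq_zero_iff.mp hz).symm
      · rintro rfl
        exact ⟨hxp1.symm, by simp⟩
    rw [hset] at h
    simpa using h.symm
  have cardpos : ∀ (s : Set V), (s.Nonempty) → 0 < Nat.card s := fun s hs =>
    Nat.card_pos_iff.mpr ⟨hs.to_subtype, Set.toFinite s⟩
  have hb0 : 1 ≤ b 0 := by
    have h := hG.card_b 0 (by omega) x x (by simp)
    rw [← h]
    exact cardpos _ ⟨p1, hxp1, hdx1⟩
  have hb1 : 1 ≤ b 1 := by
    have h := hG.card_b 1 (by omega) x p1 hdx1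
    rw [← h]
    exact cardpos _ ⟨p2, hp12, hdx2⟩
  have hc2 : 1 ≤ c 2 := by
    have h := hG.card_c 2 (by omega) x p2 hdx2
    rw [← h]
    exact cardpos _ ⟨p1, hp12.symm, hdx1⟩
  have hc3 : 1 ≤ c 3 := by
    have h := hG.card_c 3 (by omega) x y hxy
    rw [← h]
    exact cardpos _ ⟨p2, hp2y.symm, hdx2⟩
  -- real versions
  have hKr : (1 : ℝ) ≤ (b 0 : ℝ) := by exact_mod_cast hb0
  have hb1r : (1 : ℝ) ≤ (b 1 : ℝ) := by exact_mod_cast hb1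
  have hc2r : (1 : ℝ) ≤ (c 2 : ℝ) := by exact_mod_cast hc2
  have hc3r : (1 : ℝ) ≤ (c 3 : ℝ) := by exact_mod_cast hc3
  have hrec1' : 1 + (a 1 : ℝ) * u 1 + (b 1 : ℝ) * u 2 = θ * u 1 := by
    have hc1r : (c 1 : ℝ) = 1 := by exact_mod_cast hc1
    rw [hc1r, hu0] at hrec1
    linarith
  exact stmt5_alg (b 0 : ℝ) (a 1 : ℝ) (a 3 : ℝ) θ (u 1) (u 2) (u 3)
    (b 1 : ℝ) (b 2 : ℝ) (c 2 : ℝ) (c 3 : ℝ) (a 2 : ℝ)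
    hKr hb1r hc2r hc3r (Nat.cast_nonneg _) (Nat.cast_nonneg _)
    hu1 hrec1' hrec2 hrec3
end

section
/- Let Γ be a Shilla distance-regular graph with b(Γ) = b := k/a₃. Then b ≥ 2, and c₂ ≥ (2a₃ - b² + b + 2) / (b(b+1)). -/
open Finset SimpleGraph

/-- A Shilla distance-regular graph: diameter `3` and second largest eigenvalue `a 3`. -/
structure IsShilla {V : Type*} [Fintype V] [DecidableEq V] (G : SimpleGraph V)
    [DecidableRel G.Adj] (b c a : ℕ → ℕ) : Prop where
  drg : IsDRG G 3 b c a
  second : IsSecondLargestEig G (b 0) ((a 3 : ℝ))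

/-!
A Shilla graph has a₃ as an eigenvalue. Summing an eigenvector over the spheres about a
vertex gives a three-term recurrence; on the outermost sphere it forces the sum over the
2-sphere to vanish (as b₂ > 0), and then the recurrence on the 1-sphere reads a₃² = k + a₁a₃,
that is, k = b·a₃ with b = a₃ - a₁. Since c₁, b₁ ≥ 1, we have a₁ + 2 ≤ k = b(a₁ + b), so b ≥ 2.

The local graph at a vertex is a₁-regular on k > b(a₁ + 1) vertices, so greedily it contains
a co-clique C of size b + 1. The closed neighbourhoods in the local graph of the vertices of C
have a₁ + 1 elements each, and two of them meet in at most c₂ - 1 vertices (a pair of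
co-clique vertices is at distance 2, and the centre is a further common neighbour). The
second Bonferroni inequality for these subsets of the k-vertex local graph then gives
2(b + 1)(a₁ + 1) ≤ 2k + b(b + 1)(c₂ - 1), which rearranges to the bound on c₂.
-/

namespace Finset

variable {ι α : Type*} [DecidableEq α]

theorem two_mul_sum_card_le {s : Finset ι} {t : ι → Finset α} {u : Finset α}
    (htu : ∀ i ∈ s, t i ⊆ u) :
    2 * ∑ i ∈ s, #(t i) ≤ 2 * #u + ∑ p ∈ s.offDiag, #(t p.1 ∩ t p.2) := by
  set m : α → ℕ := fun z ↦ #{i ∈ s | z ∈ t i}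
  have h_sum : ∑ i ∈ s, #(t i) = ∑ z ∈ u, m z :=
    calc ∑ i ∈ s, #(t i) = ∑ i ∈ s, #{z ∈ u | z ∈ t i} :=
          sum_congr rfl fun i hi ↦ by rw [filter_mem_eq_inter, inter_eq_right.2 (htu i hi)]
      _ = ∑ z ∈ u, m z := sum_card_bipartiteAbove_eq_sum_card_bipartiteBelow _
  have h_pairs : ∑ p ∈ s.offDiag, #(t p.1 ∩ t p.2) = ∑ z ∈ u, m z * (m z - 1) :=
    calc ∑ p ∈ s.offDiag, #(t p.1 ∩ t p.2)
        = ∑ p ∈ s.offDiag, #{z ∈ u | z ∈ t p.1 ∧ z ∈ t p.2} := by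
          refine sum_congr rfl fun p hp ↦ congrArg card ?_
          ext z
          simp only [mem_filter, mem_inter]
          exact ⟨fun h ↦ ⟨htu _ (mem_offDiag.1 hp).1 h.1, h⟩, fun h ↦ h.2⟩
      _ = ∑ z ∈ u, #{p ∈ s.offDiag | z ∈ t p.1 ∧ z ∈ t p.2} :=
          sum_card_bipartiteAbove_eq_sum_card_bipartiteBelow _
      _ = ∑ z ∈ u, m z * (m z - 1) := by
          refine sum_congr rfl fun z _ ↦ ?_
          rw [Nat.mul_sub_one, ← offDiag_card]
          congr 1
          ext p
          simp only [mem_filter, mem_offDiag]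
          tauto
  have h_pointwise : ∀ n : ℕ, 2 * n ≤ 2 + n * (n - 1) := fun n ↦ by
    rcases n with _ | n
    · simp
    · rw [Nat.add_sub_cancel]; nlinarith [Nat.le_mul_self n]
  calc 2 * ∑ i ∈ s, #(t i) = ∑ z ∈ u, 2 * m z := by rw [h_sum, mul_sum]
    _ ≤ ∑ z ∈ u, (2 + m z * (m z - 1)) := sum_le_sum fun z _ ↦ h_pointwise (m z)
    _ = 2 * #u + ∑ p ∈ s.offDiag, #(t p.1 ∩ t p.2) := by
      rw [sum_add_distrib, sum_const, smul_eq_mul, mul_comm, h_pairs]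

end Finset

namespace SimpleGraph

variable {V : Type*} {G : SimpleGraph V}

theorem Walk.dist_getVert_of_length_eq_dist {u v : V} (p : G.Walk u v)
    (hp : p.length = G.dist u v) {n : ℕ} (hn : n ≤ p.length) :
    G.dist u (p.getVert n) = n := by
  rw [← length_eq_dist_of_subwalk hp (p.isSubwalk_take n), take_length, min_eq_left hn]

theorem dist_eq_two_of_adj_of_adj_s7 {x y y' : V} (hy : G.Adj x y) (hy' : G.Adj x y')
    (hne : y ≠ y') (hnadj : ¬G.Adj y y') : G.dist y y' = 2 := by
  have hle : G.dist y y' ≤ 2 := dist_le (Walk.cons hy.symm (Walk.cons hy' Walk.nil))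
  have hpos : 0 < G.dist y y' :=
    (hy.symm.reachable.trans hy'.reachable).pos_dist_of_ne hne
  have hne1 : G.dist y y' ≠ 1 := fun h ↦ hnadj (dist_eq_one_iff_adj.1 h)
  omega

theorem exists_isIndepSet_subset_card_le_mul [DecidableEq V] [DecidableRel G.Adj] (d : ℕ)
    (s : Finset V) (hs : ∀ y ∈ s, #{z ∈ s | G.Adj y z} ≤ d) :
    ∃ t ⊆ s, G.IsIndepSet (t : Set V) ∧ #s ≤ #t * (d + 1) := by
  induction s using Finset.strongInduction with
  | H s ih =>
    rcases s.eq_empty_or_nonempty with rfl | ⟨y, hy⟩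
    · exact ⟨∅, empty_subset _, by simp, by simp⟩
    set X := insert y {z ∈ s | G.Adj y z}
    have hXs : X ⊆ s := insert_subset hy (filter_subset _ _)
    obtain ⟨t, hts, ht, hcard⟩ := ih (s \ X) (sdiff_ssubset hXs ⟨y, mem_insert_self _ _⟩)
      fun z hz ↦ (card_le_card (filter_subset_filter _ sdiff_subset)).trans
        (hs z (mem_sdiff.1 hz).1)
    have hyt : ∀ z ∈ t, z ≠ y ∧ ¬G.Adj y z := fun z hz ↦ by
      have := (mem_sdiff.1 (hts hz)).2
      simp only [X, mem_insert, mem_filter, not_or, not_and] at this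
      exact ⟨this.1, this.2 (mem_sdiff.1 (hts hz)).1⟩
    refine ⟨insert y t, insert_subset hy (hts.trans sdiff_subset), ?_, ?_⟩
    · rw [coe_insert]
      exact ht.insert fun z hz _ ↦ ⟨(hyt z hz).2, fun h ↦ (hyt z hz).2 h.symm⟩
    · have hX : #X ≤ d + 1 := (card_insert_le _ _).trans (Nat.add_le_add_right (hs y hy) 1)
      rw [card_insert_of_notMem fun h ↦ (hyt y h).1 rfl]
      calc #s = #(s \ X) + #X := (card_sdiff_add_card_eq_card hXs).symm
        _ ≤ #t * (d + 1) + (d + 1) := Nat.add_le_add hcard hX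
        _ = (#t + 1) * (d + 1) := by ring

section Fintype

variable [Fintype V]

theorem sum_sum_neighborFinset [DecidableRel G.Adj] {R : Type*} [Semiring R]
    (s : Finset V) (f : V → R) :
    ∑ y ∈ s, ∑ z ∈ G.neighborFinset y, f z = ∑ z, (#{y ∈ s | G.Adj z y} : R) * f z := by
  simp_rw [neighborFinset_eq_filter, sum_filter]
  rw [sum_comm]
  refine sum_congr rfl fun z _ ↦ ?_
  rw [← sum_filter, sum_const, nsmul_eq_mul]
  simp_rw [G.adj_comm z]

variable (G)

noncomputable def sphereSum (v : V → ℝ) (x : V) (i : ℕ) : ℝ :=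
  ∑ y with G.dist x y = i, v y

variable {G}

theorem sphereSum_zero (hG : G.Connected) (v : V → ℝ) (x : V) : G.sphereSum v x 0 = v x := by
  rw [sphereSum, ← sum_singleton v x]
  congr 1
  ext y
  simp [hG.dist_eq_zero_iff, eq_comm]

theorem sphereSum_one [DecidableRel G.Adj] (v : V → ℝ) (x : V) :
    G.sphereSum v x 1 = (G.adjMatrix ℝ).mulVec v x := by
  rw [sphereSum, adjMatrix_mulVec_apply]
  congr 1
  ext y
  simp

end Fintype

end SimpleGraph

namespace IsDRG

variable {V : Type*} [Fintype V] {G : SimpleGraph V} {D : ℕ} {b c a : ℕ → ℕ}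

theorem exists_adj_dist_succ (h : IsDRG G D b c a) {i : ℕ} (hi : i < D) :
    ∃ x y z : V, G.Adj y z ∧ G.dist x y = i ∧ G.dist x z = i + 1 := by
  obtain ⟨x, w, hxw⟩ := h.exists_diam
  obtain ⟨p, hp⟩ := h.connected.exists_walk_length_eq_dist x w
  have hlen : p.length = D := hp.trans hxw
  exact ⟨x, p.getVert i, p.getVert (i + 1), p.adj_getVert_succ (by omega),
    p.dist_getVert_of_length_eq_dist hp (by omega),
    p.dist_getVert_of_length_eq_dist hp (by omega)⟩

theorem sphereSum_eq_zero (h : IsDRG G D b c a) (v : V → ℝ) (x : V) {i : ℕ} (hi : D < i) :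
    G.sphereSum v x i = 0 := by
  refine sum_eq_zero fun y hy ↦ absurd (h.le_diam x y) ?_
  rw [(mem_filter.1 hy).2]
  omega

variable [DecidableRel G.Adj]

theorem card_succ (h : IsDRG G D b c a) {i : ℕ} (hi : i ≤ D) {x y : V}
    (hxy : G.dist x y = i) : #{z | G.Adj y z ∧ G.dist x z = i + 1} = b i := by
  rw [← h.card_b i hi x y hxy, Nat.card_eq_fintype_card, Fintype.card_subtype]; rfl

theorem card_pred (h : IsDRG G D b c a) {i : ℕ} (hi : i ≤ D) {x y : V}
    (hxy : G.dist x y = i) : #{z | G.Adj y z ∧ G.dist x z = i - 1} = c i := by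
  rw [← h.card_c i hi x y hxy, Nat.card_eq_fintype_card, Fintype.card_subtype]; rfl

theorem card_same (h : IsDRG G D b c a) {i : ℕ} (hi : i ≤ D) {x y : V}
    (hxy : G.dist x y = i) : #{z | G.Adj y z ∧ G.dist x z = i} = a i := by
  rw [← h.card_a i hi x y hxy, Nat.card_eq_fintype_card, Fintype.card_subtype]; rfl

theorem card_neighborFinset (h : IsDRG G D b c a) (x : V) : #(G.neighborFinset x) = b 0 := by
  rw [← h.card_succ (Nat.zero_le D) (SimpleGraph.dist_self (v := x))]
  congr 1
  ext z
  simp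

theorem b_pos (h : IsDRG G D b c a) {i : ℕ} (hi : i < D) : 0 < b i := by
  obtain ⟨x, y, z, hyz, hy, hz⟩ := h.exists_adj_dist_succ hi
  rw [← h.card_succ hi.le hy]
  exact card_pos.2 ⟨z, by simp [hyz, hz]⟩

theorem c_pos (h : IsDRG G D b c a) {i : ℕ} (hi : 1 ≤ i) (hiD : i ≤ D) : 0 < c i := by
  obtain ⟨x, y, z, hyz, hy, hz⟩ := h.exists_adj_dist_succ (i := i - 1) (by omega)
  rw [← h.card_pred hiD (hz.trans (by omega))]
  exact card_pos.2 ⟨y, by simp [hyz.symm, hy]⟩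

theorem card_adj_dist_eq (h : IsDRG G D b c a) {i : ℕ} (hi : 1 ≤ i) (x z : V) :
    #{y | G.Adj z y ∧ G.dist x y = i} =
      (if G.dist x z = i - 1 then b (i - 1) else 0) + (if G.dist x z = i then a i else 0) +
        (if G.dist x z = i + 1 then c (i + 1) else 0) := by
  have hD := h.le_diam x z
  split_ifs <;> (try omega) <;> simp only [add_zero, zero_add]
  · have := h.card_succ (by omega) ‹G.dist x z = i - 1›
    rwa [Nat.sub_add_cancel hi] at this
  · exact h.card_same (by omega) ‹_›
  · have := h.card_pred (by omega) ‹G.dist x z = i + 1›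
    rwa [Nat.add_sub_cancel] at this
  · rw [card_eq_zero, filter_eq_empty_iff]
    rintro y - ⟨hzy, hy⟩
    have := hzy.diff_dist_adj (u := x)
    omega

theorem mul_sphereSum (h : IsDRG G D b c a) {θ : ℝ} {v : V → ℝ}
    (hv : (G.adjMatrix ℝ).mulVec v = θ • v) (x : V) {i : ℕ} (hi : 1 ≤ i) :
    θ * G.sphereSum v x i = b (i - 1) * G.sphereSum v x (i - 1) +
      a i * G.sphereSum v x i + c (i + 1) * G.sphereSum v x (i + 1) := by
  calc θ * G.sphereSum v x i = ∑ y with G.dist x y = i, ∑ z ∈ G.neighborFinset y, v z := by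
        rw [sphereSum, mul_sum]
        refine sum_congr rfl fun y _ ↦ ?_
        rw [← adjMatrix_mulVec_apply, hv, Pi.smul_apply, smul_eq_mul]
    _ = ∑ z, (#{y | G.Adj z y ∧ G.dist x y = i} : ℝ) * v z := by
        rw [sum_sum_neighborFinset]
        simp_rw [filter_filter, and_comm]
    _ = _ := by
        simp_rw [h.card_adj_dist_eq hi, Nat.cast_add, Nat.cast_ite, Nat.cast_zero, add_mul,
          ite_mul, zero_mul, sum_add_distrib, ← sum_filter, ← mul_sum, sphereSum]

variable [DecidableEq V]

theorem c_add_a_add_b (h : IsDRG G D b c a) {i : ℕ} (hi : 1 ≤ i) (hiD : i ≤ D) :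
    c i + a i + b i = b 0 := by
  obtain ⟨x, -, y, -, -, hy⟩ := h.exists_adj_dist_succ (i := i - 1) (by omega)
  rw [Nat.sub_add_cancel hi] at hy
  let S : ℕ → Finset V := fun j ↦ {z | G.Adj y z ∧ G.dist x z = j}
  have hsplit : G.neighborFinset y = S (i - 1) ∪ S i ∪ S (i + 1) := by
    ext z
    simp only [S, mem_neighborFinset, mem_union, mem_filter, mem_univ, true_and]
    constructor
    · intro hyz
      have := hyz.diff_dist_adj (u := x)
      simp only [hyz, true_and]
      omega
    · rintro ((⟨hyz, -⟩ | ⟨hyz, -⟩) | ⟨hyz, -⟩) <;> exact hyz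
  have hdisj : ∀ j k, j ≠ k → Disjoint (S j) (S k) := fun j k hjk ↦
    disjoint_filter.2 fun z _ hj hk ↦ hjk (hj.2.symm.trans hk.2)
  rw [← h.card_neighborFinset y, hsplit,
    card_union_of_disjoint (disjoint_union_left.2 ⟨hdisj _ _ (by omega), hdisj _ _ (by omega)⟩),
    card_union_of_disjoint (hdisj _ _ (by omega)),
    h.card_pred hiD hy, h.card_same hiD hy, h.card_succ hiD hy]

theorem a_one_add_two_le (h : IsDRG G D b c a) (hD : 2 ≤ D) : a 1 + 2 ≤ b 0 := by
  have := h.c_add_a_add_b le_rfl (by omega : 1 ≤ D)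
  have := h.c_pos le_rfl (by omega : 1 ≤ D)
  have := h.b_pos (by omega : 1 < D)
  omega

theorem card_inter_neighborFinset_of_adj (h : IsDRG G D b c a) {x y : V} (hxy : G.Adj x y) :
    #(G.neighborFinset x ∩ G.neighborFinset y) = a 1 := by
  have hd : G.dist x y = 1 := dist_eq_one_iff_adj.2 hxy
  rw [← h.card_same (hd ▸ h.le_diam x y) hd]
  congr 1
  ext z
  simp [and_comm]

theorem card_inter_neighborFinset_of_dist_eq_two (h : IsDRG G D b c a) {x y : V}
    (hxy : G.dist x y = 2) : #(G.neighborFinset x ∩ G.neighborFinset y) = c 2 := by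
  rw [← h.card_pred (hxy ▸ h.le_diam x y) hxy]
  congr 1
  ext z
  simp [and_comm]

theorem card_inter_inter_neighborFinset_add_one_le (h : IsDRG G D b c a) {x y y' : V}
    (hy : G.Adj x y) (hy' : G.Adj x y') (hne : y ≠ y') (hnadj : ¬G.Adj y y') :
    #(G.neighborFinset x ∩ G.neighborFinset y ∩ G.neighborFinset y') + 1 ≤ c 2 := by
  rw [← h.card_inter_neighborFinset_of_dist_eq_two (dist_eq_two_of_adj_of_adj_s7 hy hy' hne hnadj),
    ← card_insert_of_notMem (a := x) (by simp)]
  refine card_le_card (insert_subset (by simp [hy.symm, hy'.symm]) fun z hz ↦ ?_)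
  simp only [mem_inter] at hz ⊢
  exact ⟨hz.1.2, hz.2⟩

theorem exists_isIndepSet_subset_neighborFinset (h : IsDRG G D b c a) (x : V) {n : ℕ}
    (hn : n * (a 1 + 1) < b 0) :
    ∃ s ⊆ G.neighborFinset x, G.IsIndepSet (s : Set V) ∧ #s = n + 1 := by
  obtain ⟨s, hsx, hs, hcard⟩ := exists_isIndepSet_subset_card_le_mul (G := G) (a 1)
    (G.neighborFinset x) fun y hy ↦ le_of_eq <| by
      rw [← h.card_inter_neighborFinset_of_adj ((mem_neighborFinset _ _ _).1 hy)]
      congr 1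
      ext z
      simp
  rw [h.card_neighborFinset x] at hcard
  obtain ⟨t, hts, ht⟩ := exists_subset_card_eq (Nat.lt_of_mul_lt_mul_right (hn.trans_le hcard))
  exact ⟨t, hts.trans hsx, hs.mono hts, ht⟩

theorem coclique_bound (h : IsDRG G D b c a) {x : V} {s : Finset V}
    (hsx : s ⊆ G.neighborFinset x) (hs : G.IsIndepSet (s : Set V)) :
    2 * ((#s : ℤ) * (a 1 + 1)) ≤ 2 * b 0 + #s * (#s - 1) * (c 2 - 1) := by
  set N : V → Finset V := fun y ↦ insert y (G.neighborFinset x ∩ G.neighborFinset y)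
  have hN_sub : ∀ y ∈ s, N y ⊆ G.neighborFinset x := fun y hy ↦
    insert_subset (hsx hy) inter_subset_left
  have hN_card : ∀ y ∈ s, #(N y) = a 1 + 1 := fun y hy ↦ by
    rw [card_insert_of_notMem (by simp),
      h.card_inter_neighborFinset_of_adj ((mem_neighborFinset _ _ _).1 (hsx hy))]
  have hN_inter : ∀ p ∈ s.offDiag, (#(N p.1 ∩ N p.2) : ℤ) ≤ c 2 - 1 := by
    rintro ⟨y, y'⟩ hp
    simp only [mem_offDiag] at hp
    obtain ⟨hy, hy', hne⟩ := hp
    have hnadj : ¬G.Adj y y' := hs hy hy' hne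
    have hsub : N y ∩ N y' ⊆ G.neighborFinset x ∩ G.neighborFinset y ∩ G.neighborFinset y' := by
      intro z
      simp only [N, mem_inter, mem_insert, mem_neighborFinset]
      rintro ⟨rfl | ⟨hxz, hyz⟩, rfl | ⟨-, hy'z⟩⟩
      · exact absurd rfl hne
      · exact absurd hy'z.symm hnadj
      · exact absurd hyz hnadj
      · exact ⟨⟨hxz, hyz⟩, hy'z⟩
    have := h.card_inter_inter_neighborFinset_add_one_le
      ((mem_neighborFinset _ _ _).1 (hsx hy)) ((mem_neighborFinset _ _ _).1 (hsx hy')) hne hnadj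
    have := card_le_card hsub
    show (#(N y ∩ N y') : ℤ) ≤ c 2 - 1
    omega
  have hbonf := two_mul_sum_card_le hN_sub
  rw [sum_congr rfl hN_card, sum_const, smul_eq_mul, h.card_neighborFinset x] at hbonf
  have hoff : ((#s.offDiag : ℕ) : ℤ) = #s * (#s - 1) := by
    rw [offDiag_card, Nat.cast_sub (Nat.le_mul_self _)]
    push_cast
    ring
  calc 2 * ((#s : ℤ) * (a 1 + 1)) ≤ 2 * b 0 + ∑ p ∈ s.offDiag, (#(N p.1 ∩ N p.2) : ℤ) := by
        exact_mod_cast hbonf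
    _ ≤ 2 * b 0 + ∑ p ∈ s.offDiag, ((c 2 : ℤ) - 1) := by gcongr with p hp; exact hN_inter p hp
    _ = 2 * b 0 + #s * (#s - 1) * (c 2 - 1) := by rw [sum_const, nsmul_eq_mul, hoff]

theorem b_zero_eq_of_isEig_a_three (h : IsDRG G 3 b c a) (hθ : IsEig G (a 3)) :
    b 0 = (a 3 - a 1) * a 3 := by
  obtain ⟨v, hv0, hv⟩ := hθ
  obtain ⟨x, hx⟩ := Function.ne_iff.1 hv0
  have h3 := h.mul_sphereSum hv x (i := 3) (by norm_num)
  have h1 := h.mul_sphereSum hv x (i := 1) le_rfl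
  rw [h.sphereSum_eq_zero v x (by norm_num : 3 < 3 + 1)] at h3
  have hW2 : G.sphereSum v x 2 = 0 := by
    have hb2 : (b 2 : ℝ) ≠ 0 := Nat.cast_ne_zero.2 (h.b_pos (by norm_num)).ne'
    have : (b 2 : ℝ) * G.sphereSum v x 2 = 0 := by simp only [Nat.reduceSub] at h3; linarith
    exact (mul_eq_zero.1 this).resolve_left hb2
  simp only [Nat.sub_self, Nat.reduceAdd] at h1
  rw [sphereSum_one, hv, sphereSum_zero h.connected, hW2, Pi.smul_apply, smul_eq_mul] at h1
  have hreal : ((a 3 * a 3 : ℕ) : ℝ) = ((b 0 + a 1 * a 3 : ℕ) : ℝ) := by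
    push_cast
    exact mul_right_cancel₀ hx (by linear_combination h1)
  have := Nat.cast_injective hreal
  rw [Nat.sub_mul]
  omega

theorem two_le_a_three_sub_a_one (h : IsDRG G 3 b c a) (hθ : IsEig G (a 3)) :
    2 ≤ a 3 - a 1 := by
  have hk := h.b_zero_eq_of_isEig_a_three hθ
  have := h.a_one_add_two_le (by norm_num)
  by_contra! hlt
  rcases (by omega : a 3 - a 1 = 0 ∨ a 3 - a 1 = 1) with h0 | h1
  · rw [h0, zero_mul] at hk
    omega
  · rw [h1, one_mul] at hk
    omega

end IsDRG

/-- For a Shilla distance-regular graph with `b = b(Γ) = a₃ - a₁`, one has `b ≥ 2` and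
`c₂ ≥ (2a₃ - b² + b + 2)/(b(b+1))`. -/
theorem stmt7 {V : Type*} [Fintype V] [DecidableEq V] (G : SimpleGraph V)
    [DecidableRel G.Adj] (b c a : ℕ → ℕ) (hG : IsShilla G b c a)
    (β : ℤ) (hβ : β = (a 3 : ℤ) - a 1) :
    2 ≤ β ∧ (c 2 : ℚ) ≥ (2 * (a 3 : ℚ) - (β : ℚ) ^ 2 + β + 2) / ((β : ℚ) * (β + 1)) := by
  obtain ⟨h, hθ, -, -⟩ := hG
  have hk := h.b_zero_eq_of_isEig_a_three hθ
  have hn2 := h.two_le_a_three_sub_a_one hθ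
  set n := a 3 - a 1 with hn
  have hβn : β = n := by omega
  have hk_gt : n * (a 1 + 1) < b 0 := by
    rw [hk, show a 3 = a 1 + n by omega]
    nlinarith
  obtain ⟨x, -, -⟩ := h.exists_diam
  obtain ⟨s, hsx, hs, hs_card⟩ := h.exists_isIndepSet_subset_neighborFinset x hk_gt
  have hbound := h.coclique_bound hsx hs
  rw [hs_card] at hbound
  refine ⟨by omega, ?_⟩
  have hk_q : (b 0 : ℚ) = n * a 3 := by exact_mod_cast hk
  have ha_q : (a 1 : ℚ) = a 3 - n := by
    rw [hn, Nat.cast_sub (by omega)]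
    ring
  have hbound_q := (Int.cast_le (R := ℚ)).2 hbound
  push_cast [hk_q, ha_q] at hbound_q
  rw [hβn, ge_iff_le, div_le_iff₀ (by positivity)]
  push_cast
  linarith
end

section
/- Let Γ be a Shilla distance-regular graph with b = b(Γ). Then c₂ divides (b-1)·a₃·b₂. -/
open Finset SimpleGraph

/-!
Let `Aᵢ` be the distance-`i` matrix of `Γ`, so that
`Aᵢ A = b_{i-1} A_{i-1} + aᵢ Aᵢ + c_{i+1} A_{i+1}` with `A₄ = 0`. If `A v = a₃ v` with `v ≠ 0`,
applying `A₃ A = b₂ A₂ + a₃ A₃` to `v` forces `A₂ v = 0` (as `b₂ > 0`), and then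
`A² = k I + a₁ A + c₂ A₂` gives `a₃² = k + a₁ a₃`, i.e. `k = β a₃` where `β = a₃ - a₁`, so
`c₃ = k - a₃ = (β - 1) a₃`. Comparing the `(x, y)` entries of `(A₃ A) A = A₃ (A A)` for
`d(x, y) = 3` gives `c₂ p³₃₂ = c₃ b₂ + a₃² - k - a₁ a₃ = c₃ b₂`, where `p³₃₂ = (A₃ A₂)ₓᵧ`.
-/

open Matrix

namespace SimpleGraph

variable {V : Type*} {R : Type*} {G : SimpleGraph V}

variable (R G) in
noncomputable def distMatrix [Zero R] [One R] (i : ℕ) : Matrix V V R :=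
  Matrix.of fun x y => if G.dist x y = i then 1 else 0

@[simp]
lemma distMatrix_apply [Zero R] [One R] (i : ℕ) (x y : V) :
    G.distMatrix R i x y = if G.dist x y = i then 1 else 0 :=
  rfl

lemma distMatrix_one [Zero R] [One R] [DecidableRel G.Adj] :
    G.distMatrix R 1 = G.adjMatrix R := by
  ext x y
  simp [adjMatrix_apply]

lemma Connected.distMatrix_zero [DecidableEq V] [Zero R] [One R] (hG : G.Connected) :
    G.distMatrix R 0 = 1 := by
  ext x y
  simp [one_apply, hG.dist_eq_zero_iff]

lemma distMatrix_mul_adjMatrix_apply [Fintype V] [DecidableRel G.Adj] [NonAssocSemiring R]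
    (i : ℕ) (x y : V) :
    (G.distMatrix R i * G.adjMatrix R) x y = Nat.card {z | G.Adj y z ∧ G.dist x z = i} := by
  classical
  rw [Nat.card_eq_fintype_card, Fintype.card_subtype, mul_apply]
  simp only [distMatrix_apply, adjMatrix_apply, mul_ite, mul_one, mul_zero, Set.mem_ofPred_eq]
  rw [← Finset.sum_boole]
  refine Finset.sum_congr rfl fun z _ => ?_
  by_cases h : G.dist x z = i <;> simp [h, G.adj_comm y z]

end SimpleGraph

namespace IsDRG

variable {V R : Type*} [Fintype V] {G : SimpleGraph V} {D : ℕ} {b c a : ℕ → ℕ}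

lemma distMatrix_eq_zero [Zero R] [One R] (hG : IsDRG G D b c a) {i : ℕ}
    (hi : D < i) : G.distMatrix R i = 0 := by
  ext x y
  have := hG.le_diam x y
  simp [show G.dist x y ≠ i by omega]

lemma distMatrix_mul_adjMatrix [NonAssocSemiring R] [DecidableRel G.Adj]
    (hG : IsDRG G D b c a) {i : ℕ} (hi : 1 ≤ i) (hiD : i ≤ D) :
    G.distMatrix R i * G.adjMatrix R = b (i - 1) • G.distMatrix R (i - 1) + a i • G.distMatrix R i
      + c (i + 1) • G.distMatrix R (i + 1) := by
  ext x y
  rw [distMatrix_mul_adjMatrix_apply]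
  simp only [Matrix.add_apply, Matrix.smul_apply, distMatrix_apply, smul_ite, nsmul_eq_mul,
    mul_one, smul_zero]
  have hjD := hG.le_diam x y
  obtain ⟨j, hj⟩ : ∃ j, G.dist x y = j := ⟨_, rfl⟩
  rw [hj] at hjD ⊢
  obtain rfl | rfl | rfl | hfar : i = j + 1 ∨ i = j ∨ j = i + 1 ∨ (j + 1 < i ∨ i + 1 < j) := by
    omega
  · rw [hG.card_b j (by omega) x y hj]
    simp [show j ≠ j + 1 + 1 by omega]
  · rw [hG.card_a i hiD x y hj]
    simp [show i ≠ i - 1 by omega]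
  · have hc := hG.card_c (i + 1) hjD x y hj
    rw [Nat.add_sub_cancel] at hc
    rw [hc]
    simp [show i + 1 ≠ i - 1 by omega]
  · have hempty : {z | G.Adj y z ∧ G.dist x z = i} = ∅ := by
      ext z
      simp only [Set.mem_ofPred_eq, Set.mem_empty_iff_false, iff_false, not_and]
      intro hyz
      rcases hyz.diff_dist_adj (u := x) with h | h | h <;> omega
    simp [hempty, show j ≠ i - 1 by omega, show j ≠ i by omega, show j ≠ i + 1 by omega]

lemma b_pred_pos (hG : IsDRG G D b c a) (hD : 1 ≤ D) : 0 < b (D - 1) := by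
  obtain ⟨x, y, hxy⟩ := hG.exists_diam
  obtain ⟨p, hp⟩ := hG.connected.exists_walk_length_eq_dist x y
  have hnil : ¬ p.Nil := by rw [← Walk.length_eq_zero_iff]; omega
  have hzy : G.Adj p.penultimate y := p.adj_penultimate hnil
  have hxz : G.dist x p.penultimate = D - 1 := by
    have hle : G.dist x p.penultimate ≤ D - 1 := by
      have := dist_le p.dropLast
      rwa [Walk.length_dropLast, hp, hxy] at this
    rcases hzy.diff_dist_adj (u := x) with h | h | h <;> omega
  rw [← hG.card_b (D - 1) (by omega) x _ hxz, Nat.card_pos_iff]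
  exact ⟨⟨y, hzy, by omega⟩, inferInstance⟩

lemma c_add_a_eq_b_zero (hG : IsDRG G D b c a) (hD : 1 ≤ D) : c D + a D = b 0 := by
  obtain ⟨x, y, hxy⟩ := hG.exists_diam
  have hsplit : {z | G.Adj y z ∧ G.dist y z = 0 + 1}
      = {z | G.Adj y z ∧ G.dist x z = D - 1} ∪ {z | G.Adj y z ∧ G.dist x z = D} := by
    ext z
    simp only [zero_add, dist_eq_one_iff_adj, and_self, Set.mem_union, Set.mem_ofPred_eq]
    refine ⟨fun hyz => ?_, by rintro (h | h) <;> exact h.1⟩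
    have := hG.le_diam x z
    have : G.dist x z = D - 1 ∨ G.dist x z = D := by
      rcases hyz.diff_dist_adj (u := x) with h | h | h <;> omega
    exact this.imp (⟨hyz, ·⟩) (⟨hyz, ·⟩)
  have hdisj : Disjoint {z | G.Adj y z ∧ G.dist x z = D - 1} {z | G.Adj y z ∧ G.dist x z = D} :=
    Set.disjoint_left.mpr fun z h h' => by have := h.2; have := h'.2; omega
  rw [← hG.card_c D le_rfl x y hxy, ← hG.card_a D le_rfl x y hxy,
    ← hG.card_b 0 (Nat.zero_le D) y y (dist_self), hsplit]
  simp only [Nat.card_coe_set_eq]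
  exact (Set.ncard_union_eq hdisj).symm

variable [DecidableRel G.Adj]

lemma adjMatrix_mul_self [NonAssocSemiring R] [DecidableEq V] (hG : IsDRG G D b c a)
    (hD : 1 ≤ D) :
    G.adjMatrix R * G.adjMatrix R
      = b 0 • (1 : Matrix V V R) + a 1 • G.adjMatrix R + c 2 • G.distMatrix R 2 := by
  simpa [distMatrix_one, hG.connected.distMatrix_zero] using
    hG.distMatrix_mul_adjMatrix (R := R) le_rfl hD

lemma distMatrix_diam_mul_adjMatrix [NonAssocSemiring R] (hG : IsDRG G D b c a) (hD : 1 ≤ D) :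
    G.distMatrix R D * G.adjMatrix R
      = b (D - 1) • G.distMatrix R (D - 1) + a D • G.distMatrix R D := by
  simpa [hG.distMatrix_eq_zero (Nat.lt_succ_self D)] using
    hG.distMatrix_mul_adjMatrix (R := R) hD le_rfl

lemma c_two_mul_distMatrix_mul_apply_add [DecidableEq V] (hG : IsDRG G D b c a) (hD : 1 ≤ D)
    {x y : V}
    (hxy : G.dist x y = D) :
    c 2 * (G.distMatrix ℕ D * G.distMatrix ℕ 2) x y + b 0 + a 1 * a D
      = c D * b (D - 1) + a D * a D := by
  have h := congrFun (congrFun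
    (Matrix.mul_assoc (G.distMatrix ℕ D) (G.adjMatrix ℕ) (G.adjMatrix ℕ)) x) y
  rw [hG.distMatrix_diam_mul_adjMatrix hD, hG.adjMatrix_mul_self hD] at h
  simp only [Matrix.add_mul, Matrix.smul_mul, Matrix.mul_add, Matrix.mul_smul, Matrix.mul_one,
    Matrix.add_apply, Matrix.smul_apply, smul_eq_mul, distMatrix_mul_adjMatrix_apply,
    Nat.cast_id, hG.card_c D le_rfl x y hxy, hG.card_a D le_rfl x y hxy, distMatrix_apply,
    hxy, if_true] at h
  linarith

lemma mulVec_distMatrix_pred_eq_zero (hG : IsDRG G D b c a) (hD : 1 ≤ D) {v : V → ℝ}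
    (hv : G.adjMatrix ℝ *ᵥ v = (a D : ℝ) • v) : G.distMatrix ℝ (D - 1) *ᵥ v = 0 := by
  have h := congrArg (· *ᵥ v) (hG.distMatrix_diam_mul_adjMatrix (R := ℝ) hD)
  simp only [← mulVec_mulVec, hv, mulVec_smul, add_mulVec, smul_mulVec, Nat.cast_smul_eq_nsmul,
    right_eq_add] at h
  exact (smul_eq_zero.mp h).resolve_left (hG.b_pred_pos hD).ne'

lemma eigenvalue_mul_self [DecidableEq V] (hG : IsDRG G D b c a) (hD : 1 ≤ D) {θ : ℝ}
    {v : V → ℝ} (hv0 : v ≠ 0) (hv : G.adjMatrix ℝ *ᵥ v = θ • v)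
    (h2 : G.distMatrix ℝ 2 *ᵥ v = 0) : θ * θ = b 0 + a 1 * θ := by
  have h := congrArg (· *ᵥ v) (hG.adjMatrix_mul_self (R := ℝ) hD)
  simp only [← mulVec_mulVec, hv, mulVec_smul, add_mulVec, smul_mulVec, one_mulVec, h2,
    smul_zero, add_zero] at h
  have hzero : (θ * θ - (b 0 + a 1 * θ)) • v = 0 := by
    rw [sub_smul, add_smul, mul_smul, mul_smul, h, Nat.cast_smul_eq_nsmul, Nat.cast_smul_eq_nsmul,
      sub_self]
  exact sub_eq_zero.mp ((smul_eq_zero.mp hzero).resolve_right hv0)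

lemma b_zero_add_a_one_mul_of_isEig [DecidableEq V] (hG : IsDRG G 3 b c a)
    (h : IsEig G (a 3)) :
    b 0 + a 1 * a 3 = a 3 * a 3 := by
  obtain ⟨v, hv0, hv⟩ := h
  have h2 : G.distMatrix ℝ 2 *ᵥ v = 0 := hG.mulVec_distMatrix_pred_eq_zero (by norm_num) hv
  exact_mod_cast (hG.eigenvalue_mul_self (by norm_num) hv0 hv h2).symm

end IsDRG

theorem stmt9_general {V : Type*} [Fintype V] [DecidableEq V] (G : SimpleGraph V)
    [DecidableRel G.Adj] (b c a : ℕ → ℕ) (hG : IsShilla G b c a)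
    (β : ℕ) (hβ : a 3 = a 1 + β) :
    c 2 ∣ (β - 1) * a 3 * b 2 := by
  obtain ⟨x, y, hxy⟩ := hG.drg.exists_diam
  have hk : b 0 + a 1 * a 3 = a 3 * a 3 := hG.drg.b_zero_add_a_one_mul_of_isEig hG.second.1
  have hcount := hG.drg.c_two_mul_distMatrix_mul_apply_add (by norm_num) hxy
  rw [show 3 - 1 = 2 from rfl] at hcount
  have hp : c 2 * (G.distMatrix ℕ 3 * G.distMatrix ℕ 2) x y = c 3 * b 2 := by omega
  have hdeg : c 3 + a 3 = b 0 := hG.drg.c_add_a_eq_b_zero (by norm_num)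
  have hsq : a 3 * a 3 = a 1 * a 3 + β * a 3 := by rw [← add_mul, ← hβ]
  have hc3 : c 3 = (β - 1) * a 3 := by
    rw [Nat.sub_one_mul]
    omega
  rw [← hc3]
  exact Dvd.intro _ hp

/-- For a Shilla distance-regular graph with `b = b(Γ)`, `c₂` divides `(b-1)·a₃·b₂`. -/
theorem stmt9 {V : Type*} [Fintype V] [DecidableEq V] (G : SimpleGraph V)
    [DecidableRel G.Adj] (b c a : ℕ → ℕ) (hG : IsShilla G b c a)
    (β : ℕ) (hβ2 : 2 ≤ β) (hβ : a 3 = a 1 + β) :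
    c 2 ∣ (β - 1) * a 3 * b 2 :=
  stmt9_general G b c a hG β hβ
end

section
/- Let Γ be a Shilla distance-regular graph with b = b(Γ). Then c₂ divides (b + a₃)·b₂, and (b + a₃)·b₂ ≥ (1 + a₃)·c₂, with equality if and only if p³₃₃ = 0. -/
open Finset SimpleGraph

set_option linter.unusedSectionVars false

section Aux
variable {V : Type*} [Fintype V] [DecidableEq V] {G : SimpleGraph V} [DecidableRel G.Adj]

lemma ncard_setOf (p : V → Prop) [DecidablePred p] :
    Nat.card {z : V | p z} = (univ.filter p).card := by
  simp [Nat.card_eq_fintype_card, Fintype.card_subtype]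

lemma double_count (s t : Finset V) (R : V → V → Prop) [DecidableRel R] :
    ∑ u ∈ s, (t.filter (R u)).card = ∑ w ∈ t, (s.filter (fun u => R u w)).card := by
  simp_rw [Finset.card_filter]
  exact Finset.sum_comm

lemma penult (hconn : G.Connected) {x y : V} {j : ℕ} (h : G.dist x y = j + 1) :
    ∃ z : V, G.Adj z y ∧ G.dist x z = j := by
  obtain ⟨p, hp⟩ := exists_walk_of_dist_ne_zero (by omega : G.dist x y ≠ 0)
  have hlen : p.length = j + 1 := by rw [hp, h]
  refine ⟨p.getVert j, ?_, ?_⟩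
  · have := p.adj_getVert_succ (by omega : j < p.length)
    rwa [show j + 1 = p.length from hlen.symm, p.getVert_length] at this
  · have hle : ∀ i, i ≤ p.length → G.dist x (p.getVert i) ≤ i := by
      intro i hi
      induction i with
      | zero => simp [p.getVert_zero]
      | succ n ih =>
        have h1 : G.dist x (p.getVert n) ≤ n := ih (by omega)
        have h2 : G.Adj (p.getVert n) (p.getVert (n+1)) := p.adj_getVert_succ (by omega)
        calc G.dist x (p.getVert (n+1)) ≤ G.dist x (p.getVert n) + G.dist (p.getVert n) (p.getVert (n+1)) :=
              hconn.dist_triangle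
          _ ≤ n + 1 := by rw [dist_eq_one_iff_adj.2 h2]; omega
    have h1 : G.dist x (p.getVert j) ≤ j := hle j (by omega)
    have h2 : G.Adj (p.getVert j) y := by
      have := p.adj_getVert_succ (by omega : j < p.length)
      rwa [show j + 1 = p.length from hlen.symm, p.getVert_length] at this
    have h3 : G.dist x y ≤ G.dist x (p.getVert j) + 1 := by
      calc G.dist x y ≤ G.dist x (p.getVert j) + G.dist (p.getVert j) y := hconn.dist_triangle
        _ = G.dist x (p.getVert j) + 1 := by rw [dist_eq_one_iff_adj.2 h2]
    omega

variable {b c a : ℕ → ℕ}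

lemma fcard_b (hG : IsDRG G 3 b c a) {i : ℕ} (hi : i ≤ 3) {x y : V} (h : G.dist x y = i) :
    (univ.filter fun z => G.Adj y z ∧ G.dist x z = i + 1).card = b i := by
  rw [← ncard_setOf]; exact hG.card_b i hi x y h

lemma fcard_c (hG : IsDRG G 3 b c a) {i : ℕ} (hi : i ≤ 3) {x y : V} (h : G.dist x y = i) :
    (univ.filter fun z => G.Adj y z ∧ G.dist x z = i - 1).card = c i := by
  rw [← ncard_setOf]; exact hG.card_c i hi x y h

lemma fcard_a (hG : IsDRG G 3 b c a) {i : ℕ} (hi : i ≤ 3) {x y : V} (h : G.dist x y = i) :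
    (univ.filter fun z => G.Adj y z ∧ G.dist x z = i).card = a i := by
  rw [← ncard_setOf]; exact hG.card_a i hi x y h

/-- every vertex has degree `b 0` -/
lemma deg_eq (hG : IsDRG G 3 b c a) (x : V) :
    (univ.filter fun z => G.Adj x z).card = b 0 := by
  rw [← fcard_b hG (by omega) (G.dist_self (v := x))]
  congr 1
  apply Finset.filter_congr
  intro z _
  constructor
  · intro hz; exact ⟨hz, dist_eq_one_iff_adj.2 hz⟩
  · intro hz; exact hz.1

/-- `c 1 = 1` given an adjacent pair -/
lemma c1_eq (hG : IsDRG G 3 b c a) {x y : V} (h : G.Adj x y) : c 1 = 1 := by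
  have hd : G.dist x y = 1 := dist_eq_one_iff_adj.2 h
  rw [← fcard_c hG (by omega) hd]
  rw [show (univ.filter fun z => G.Adj y z ∧ G.dist x z = 1 - 1) = {x} from ?_]
  · simp
  · ext z
    simp only [mem_filter, mem_univ, true_and, mem_singleton]
    constructor
    · rintro ⟨_, hz⟩
      exact ((hG.connected.dist_eq_zero_iff).1 hz).symm
    · rintro rfl
      exact ⟨h.symm, by simp⟩

/-- split of degree at distance 3: `k = c 3 + a 3` -/
lemma deg_split3 (hG : IsDRG G 3 b c a) {x y : V} (h : G.dist x y = 3) :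
    b 0 = c 3 + a 3 := by
  have hmap : ∀ z ∈ univ.filter (fun z => G.Adj y z), G.dist x z ∈ ({2, 3} : Finset ℕ) := by
    intro z hz
    simp only [mem_filter, mem_univ, true_and] at hz
    have h1 : G.dist x z ≤ 3 := hG.le_diam x z
    have h2 : G.dist x y ≤ G.dist x z + G.dist z y := hG.connected.dist_triangle
    rw [dist_eq_one_iff_adj.2 hz.symm] at h2
    simp only [mem_insert, mem_singleton]
    omega
  have := Finset.card_eq_sum_card_fiberwise hmap
  rw [deg_eq hG y] at this
  rw [Finset.sum_pair (by omega : (2:ℕ) ≠ 3)] at this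
  have e2 : ((univ.filter (fun z => G.Adj y z)).filter (fun z => G.dist x z = 2)).card = c 3 := by
    rw [Finset.filter_filter]
    simpa using fcard_c hG (le_refl 3) h
  have e3 : ((univ.filter (fun z => G.Adj y z)).filter (fun z => G.dist x z = 3)).card = a 3 := by
    rw [Finset.filter_filter]
    exact fcard_a hG (le_refl 3) h
  rw [e2, e3] at this
  omega

/-- split of degree at distance 1: `k = 1 + a 1 + b 1` -/
lemma deg_split1 (hG : IsDRG G 3 b c a) {x y : V} (h : G.Adj x y) :
    b 0 = 1 + a 1 + b 1 := by
  have hd : G.dist x y = 1 := dist_eq_one_iff_adj.2 h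
  have hmap : ∀ z ∈ univ.filter (fun z => G.Adj y z), G.dist x z ∈ ({0, 1, 2} : Finset ℕ) := by
    intro z hz
    simp only [mem_filter, mem_univ, true_and] at hz
    have h2 : G.dist x z ≤ G.dist x y + G.dist y z := hG.connected.dist_triangle
    rw [hd, dist_eq_one_iff_adj.2 hz] at h2
    simp only [mem_insert, mem_singleton]
    omega
  have := Finset.card_eq_sum_card_fiberwise hmap
  rw [deg_eq hG y] at this
  rw [show ({0,1,2} : Finset ℕ) = insert 0 {1, 2} from rfl, Finset.sum_insert (by simp),
    Finset.sum_pair (by omega : (1:ℕ) ≠ 2)] at this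
  have e0 : (filter (fun z => G.Adj y z) univ).filter (fun z => G.dist x z = 0) = {x} := by
    ext z
    simp only [mem_filter, mem_univ, true_and, mem_singleton]
    constructor
    · rintro ⟨_, hz⟩; exact ((hG.connected.dist_eq_zero_iff).1 hz).symm
    · rintro rfl; exact ⟨h.symm, by simp⟩
  have e1 : ((univ.filter (fun z => G.Adj y z)).filter (fun z => G.dist x z = 1)).card = a 1 := by
    rw [Finset.filter_filter]
    exact fcard_a hG (by omega) hd
  have e2 : ((univ.filter (fun z => G.Adj y z)).filter (fun z => G.dist x z = 2)).card = b 1 := by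
    rw [Finset.filter_filter]
    exact fcard_b hG (by omega) hd
  rw [e0, e1, e2] at this
  simp only [Finset.card_singleton] at this
  omega

/-- double counting edges between consecutive spheres -/
lemma level_count (hG : IsDRG G 3 b c a) {i : ℕ} (hi : i ≤ 2) (x : V) :
    (univ.filter fun z => G.dist x z = i).card * b i
      = (univ.filter fun z => G.dist x z = i + 1).card * c (i + 1) := by
  have key := double_count (univ.filter fun z => G.dist x z = i)
    (univ.filter fun z => G.dist x z = i + 1) (fun u w => G.Adj u w)
  have L : ∀ u ∈ (univ.filter fun z => G.dist x z = i),
      ((univ.filter fun z => G.dist x z = i + 1).filter (fun w => G.Adj u w)).card = b i := by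
    intro u hu
    simp only [mem_filter, mem_univ, true_and] at hu
    rw [Finset.filter_filter, ← fcard_b hG (by omega : i ≤ 3) hu]
    congr 1
    apply Finset.filter_congr
    intro z _
    constructor
    · rintro ⟨h1, h2⟩; exact ⟨h2, h1⟩
    · rintro ⟨h1, h2⟩; exact ⟨h2, h1⟩
  have R : ∀ w ∈ (univ.filter fun z => G.dist x z = i + 1),
      ((univ.filter fun z => G.dist x z = i).filter (fun u => G.Adj u w)).card = c (i + 1) := by
    intro w hw
    simp only [mem_filter, mem_univ, true_and] at hw
    rw [Finset.filter_filter, ← fcard_c hG (by omega : i + 1 ≤ 3) hw]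
    congr 1
    apply Finset.filter_congr
    intro z _
    simp only [Nat.add_sub_cancel]
    constructor
    · rintro ⟨h1, h2⟩; exact ⟨h2.symm, h1⟩
    · rintro ⟨h1, h2⟩; exact ⟨h2, h1.symm⟩
  rw [Finset.sum_congr rfl L, Finset.sum_congr rfl R] at key
  simpa [Finset.sum_const, mul_comm] using key

/-- partition of the sphere Γ₃(x) by distance from `y` when `dist x y = 3` -/
lemma sphere3_split (hG : IsDRG G 3 b c a) {x y : V} (h : G.dist x y = 3) :
    (univ.filter fun z => G.dist x z = 3).card
      = 1 + a 3 + (univ.filter fun z => G.dist x z = 3 ∧ G.dist y z = 2).card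
        + (univ.filter fun z => G.dist x z = 3 ∧ G.dist y z = 3).card := by
  have hmap : ∀ z ∈ univ.filter (fun z => G.dist x z = 3),
      G.dist y z ∈ ({0,1,2,3} : Finset ℕ) := by
    intro z _
    have := hG.le_diam y z
    simp only [mem_insert, mem_singleton]
    omega
  have key := Finset.card_eq_sum_card_fiberwise hmap
  rw [show ({0,1,2,3} : Finset ℕ) = insert 0 (insert 1 {2, 3}) from rfl,
    Finset.sum_insert (by simp), Finset.sum_insert (by simp),
    Finset.sum_pair (by omega : (2:ℕ) ≠ 3)] at key
  have e0 : (univ.filter (fun z => G.dist x z = 3)).filter (fun z => G.dist y z = 0) = {y} := by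
    ext z
    simp only [mem_filter, mem_univ, true_and, mem_singleton]
    constructor
    · rintro ⟨_, hz⟩; exact ((hG.connected.dist_eq_zero_iff).1 hz).symm
    · rintro rfl; exact ⟨h, by simp⟩
  have e1 : ((univ.filter (fun z => G.dist x z = 3)).filter (fun z => G.dist y z = 1)).card
      = a 3 := by
    rw [Finset.filter_filter, ← fcard_a hG (le_refl 3) h]
    congr 1
    apply Finset.filter_congr
    intro z _
    constructor
    · rintro ⟨h1, h2⟩; exact ⟨dist_eq_one_iff_adj.1 h2, h1⟩
    · rintro ⟨h1, h2⟩; exact ⟨h2, dist_eq_one_iff_adj.2 h1⟩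
  have e2 : (univ.filter (fun z => G.dist x z = 3)).filter (fun z => G.dist y z = 2)
      = univ.filter fun z => G.dist x z = 3 ∧ G.dist y z = 2 := Finset.filter_filter _ _ _
  have e3 : (univ.filter (fun z => G.dist x z = 3)).filter (fun z => G.dist y z = 3)
      = univ.filter fun z => G.dist x z = 3 ∧ G.dist y z = 3 := Finset.filter_filter _ _ _
  rw [e0, e1, e2, e3] at key
  simp only [Finset.card_singleton] at key
  omega

/-- the key double count:
`c 2 * p²₃₂ + a 3 * a 1 + (a 3 + c 3) = a 3 * a 3 + c 3 * b 2` -/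
lemma big_identity (hG : IsDRG G 3 b c a) {x y : V} (h : G.dist x y = 3) :
    c 2 * (univ.filter fun z => G.dist x z = 3 ∧ G.dist y z = 2).card
      + a 3 * a 1 + (a 3 + c 3) = a 3 * a 3 + c 3 * b 2 := by
  set s := univ.filter (fun z => G.Adj y z) with hs
  set t := univ.filter (fun z => G.dist x z = 3 ∧ G.dist y z = 2) with ht
  set t' := univ.filter (fun z => G.dist x z = 3 ∧ G.Adj y z) with ht'
  -- Step A : edges between Γ₁(y) and t, counted from t
  have stepA : ∑ w ∈ s, (t.filter (fun z => G.Adj w z)).card = t.card * c 2 := by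
    rw [double_count]
    rw [Finset.sum_congr rfl (fun z hz => ?_), Finset.sum_const, smul_eq_mul]
    have hz2 : G.dist y z = 2 := by
      rw [ht, mem_filter] at hz; exact hz.2.2
    rw [hs, Finset.filter_filter, ← fcard_c hG (by omega : 2 ≤ 3) hz2]
    congr 1
    apply Finset.filter_congr
    intro w _
    constructor
    · rintro ⟨h1, h2⟩; exact ⟨h2.symm, by simpa using dist_eq_one_iff_adj.2 h1⟩
    · rintro ⟨h1, h2⟩
      refine ⟨dist_eq_one_iff_adj.1 (by simpa using h2), h1.symm⟩
  -- Step B : counted from each neighbour w of y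
  have stepB : ∀ w ∈ s, (t.filter (fun z => G.Adj w z)).card + 1
      + (t'.filter (fun z => G.Adj w z)).card
      = (if G.dist x w = 3 then a 3 else b 2) := by
    intro w hw
    rw [hs, mem_filter] at hw
    have hyw : G.Adj y w := hw.2
    have hdw : G.dist x w = 2 ∨ G.dist x w = 3 := by
      have h1 : G.dist x w ≤ 3 := hG.le_diam x w
      have h2 : G.dist x y ≤ G.dist x w + G.dist w y := hG.connected.dist_triangle
      rw [dist_eq_one_iff_adj.2 hyw.symm] at h2
      omega
    set T := univ.filter (fun z => G.Adj w z ∧ G.dist x z = 3) with hT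
    have hmapT : ∀ z ∈ T, G.dist y z ∈ ({0,1,2} : Finset ℕ) := by
      intro z hz
      rw [hT, mem_filter] at hz
      have h1 : G.dist y z ≤ G.dist y w + G.dist w z := hG.connected.dist_triangle
      rw [dist_eq_one_iff_adj.2 hyw, dist_eq_one_iff_adj.2 hz.2.1] at h1
      simp only [mem_insert, mem_singleton]
      omega
    have key := Finset.card_eq_sum_card_fiberwise hmapT
    rw [show ({0,1,2} : Finset ℕ) = insert 0 {1, 2} from rfl,
      Finset.sum_insert (by simp), Finset.sum_pair (by omega : (1:ℕ) ≠ 2)] at key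
    have e0 : T.filter (fun z => G.dist y z = 0) = {y} := by
      ext z
      rw [hT]
      simp only [mem_filter, mem_univ, true_and, mem_singleton, and_assoc]
      constructor
      · rintro ⟨_, _, hz⟩; exact ((hG.connected.dist_eq_zero_iff).1 hz).symm
      · rintro rfl; exact ⟨hyw.symm, h, by simp⟩
    have e1 : T.filter (fun z => G.dist y z = 1) = t'.filter (fun z => G.Adj w z) := by
      rw [hT, ht', Finset.filter_filter, Finset.filter_filter]
      apply Finset.filter_congr
      intro z _
      constructor
      · rintro ⟨⟨h1, h2⟩, h3⟩; exact ⟨⟨h2, dist_eq_one_iff_adj.1 h3⟩, h1⟩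
      · rintro ⟨⟨h1, h2⟩, h3⟩; exact ⟨⟨h3, h1⟩, dist_eq_one_iff_adj.2 h2⟩
    have e2 : T.filter (fun z => G.dist y z = 2) = t.filter (fun z => G.Adj w z) := by
      rw [hT, ht, Finset.filter_filter, Finset.filter_filter]
      apply Finset.filter_congr
      intro z _
      constructor
      · rintro ⟨⟨h1, h2⟩, h3⟩; exact ⟨⟨h2, h3⟩, h1⟩
      · rintro ⟨⟨h1, h2⟩, h3⟩; exact ⟨⟨h3, h1⟩, h2⟩
    rw [e0, e1, e2] at key
    simp only [Finset.card_singleton] at key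
    have hcardT : T.card = (if G.dist x w = 3 then a 3 else b 2) := by
      rcases hdw with h2 | h3
      · rw [if_neg (by omega), hT]
        have := fcard_b hG (by omega : 2 ≤ 3) h2
        simpa using this
      · rw [if_pos h3, hT]
        exact fcard_a hG (le_refl 3) h3
    omega
  -- Step C : the correction term
  have stepC : ∑ w ∈ s, (t'.filter (fun z => G.Adj w z)).card = a 3 * a 1 := by
    rw [double_count]
    have ht'card : t'.card = a 3 := by
      rw [ht', ← fcard_a hG (le_refl 3) h]
      congr 1
      apply Finset.filter_congr
      intro z _
      exact ⟨fun ⟨h1, h2⟩ => ⟨h2, h1⟩, fun ⟨h1, h2⟩ => ⟨h2, h1⟩⟩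
    rw [Finset.sum_congr rfl (fun z hz => ?_), Finset.sum_const, smul_eq_mul, ht'card]
    have hz1 : G.dist y z = 1 := by
      rw [ht', mem_filter] at hz
      exact dist_eq_one_iff_adj.2 hz.2.2
    rw [hs, Finset.filter_filter, ← fcard_a hG (by omega : 1 ≤ 3) hz1]
    congr 1
    apply Finset.filter_congr
    intro w _
    constructor
    · rintro ⟨h1, h2⟩; exact ⟨h2.symm, dist_eq_one_iff_adj.2 h1⟩
    · rintro ⟨h1, h2⟩; exact ⟨dist_eq_one_iff_adj.1 h2, h1.symm⟩
  -- Step D : summing the right hand sides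
  have stepD : ∑ w ∈ s, (if G.dist x w = 3 then a 3 else b 2)
      = a 3 * a 3 + c 3 * b 2 := by
    rw [Finset.sum_ite, Finset.sum_const, Finset.sum_const, smul_eq_mul, smul_eq_mul]
    congr 1
    · congr 1
      rw [hs, Finset.filter_filter, ← fcard_a hG (le_refl 3) h]
    · congr 1
      have efil : s.filter (fun w => ¬ G.dist x w = 3) = s.filter (fun w => G.dist x w = 2) := by
        apply Finset.filter_congr
        intro w hw
        rw [hs, mem_filter] at hw
        have h1 : G.dist x w ≤ 3 := hG.le_diam x w
        have h2 : G.dist x y ≤ G.dist x w + G.dist w y := hG.connected.dist_triangle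
        rw [dist_eq_one_iff_adj.2 hw.2.symm] at h2
        constructor
        · intro hne; omega
        · intro he; omega
      rw [efil, hs, Finset.filter_filter]
      have := fcard_c hG (le_refl 3) h
      simpa using this
  -- combine
  have combined : ∑ w ∈ s, ((t.filter (fun z => G.Adj w z)).card + 1
      + (t'.filter (fun z => G.Adj w z)).card)
      = a 3 * a 3 + c 3 * b 2 := by
    rw [Finset.sum_congr rfl stepB, stepD]
  rw [Finset.sum_add_distrib, Finset.sum_add_distrib, Finset.sum_const, smul_eq_mul, mul_one,
    stepA, stepC] at combined
  have hscard : s.card = b 0 := deg_eq hG y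
  have hsplit : b 0 = c 3 + a 3 := deg_split3 hG h
  rw [mul_comm (c 2)]
  omega

/-- generic local eigenvalue-equation identity -/
lemma spectral_key (hG : IsDRG G 3 b c a) (v : V → ℝ) (i : ℕ) (f : ℕ → ℕ)
    (hf : ∀ z x : V, ((univ.filter fun w => G.Adj x w ∧ G.dist z w = i)).card = f (G.dist x z))
    (x : V) :
    ∑ y ∈ univ.filter (fun y => G.Adj x y), ∑ z ∈ univ.filter (fun z => G.dist y z = i), v z
      = ∑ j ∈ Finset.range 4,
          (f j : ℝ) * ∑ z ∈ univ.filter (fun z => G.dist x z = j), v z := by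
  have step1 : ∑ y ∈ univ.filter (fun y => G.Adj x y),
      ∑ z ∈ univ.filter (fun z => G.dist y z = i), v z
      = ∑ z : V, (f (G.dist x z) : ℝ) * v z := by
    have e1 : ∀ y : V, ∑ z ∈ univ.filter (fun z => G.dist y z = i), v z
        = ∑ z : V, (if G.dist y z = i then v z else 0) := by
      intro y; rw [Finset.sum_filter]
    rw [Finset.sum_congr rfl (fun y _ => e1 y), Finset.sum_comm]
    refine Finset.sum_congr rfl fun z _ => ?_
    simp only [← Finset.sum_filter]
    rw [Finset.sum_const, nsmul_eq_mul]
    congr 1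
    rw [Finset.filter_filter, ← hf z x]
    norm_cast
    congr 1
    apply Finset.filter_congr
    intro w _
    rw [dist_comm (u := w) (v := z)]
  rw [step1]
  have hmaps : ∀ z ∈ (univ : Finset V), G.dist x z ∈ Finset.range 4 := by
    intro z _
    simp only [Finset.mem_range]
    have := hG.le_diam x z
    omega
  rw [← Finset.sum_fiberwise_of_maps_to hmaps (fun z => (f (G.dist x z) : ℝ) * v z)]
  refine Finset.sum_congr rfl fun j _ => ?_
  rw [Finset.mul_sum]
  refine Finset.sum_congr rfl fun z hz => ?_
  simp only [mem_filter, mem_univ, true_and] at hz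
  rw [hz]

/-- if `a 3` is an eigenvalue, then `k = β * a 3` where `β = a 3 - a 1` -/
lemma k_eq_beta_a3 (hG : IsDRG G 3 b c a)
    (heig : ∃ v : V → ℝ, v ≠ 0 ∧ (G.adjMatrix ℝ).mulVec v = ((a 3 : ℝ)) • v)
    {β : ℕ} (hβ : a 3 = a 1 + β) (hb2 : 0 < b 2) (hc3 : 0 < c 3) :
    b 0 = β * a 3 := by
  obtain ⟨v, hv0, hAv⟩ := heig
  have hv : ∀ x : V, ∑ y ∈ univ.filter (fun y => G.Adj x y), v y = ((a 3 : ℝ)) * v x := by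
    intro x
    have h1 := congrFun hAv x
    rw [adjMatrix_mulVec_apply, neighborFinset_eq_filter] at h1
    simpa using h1
  set W : ℕ → V → ℝ := fun j x => ∑ z ∈ univ.filter (fun z => G.dist x z = j), v z with hW
  have hW0 : ∀ x : V, W 0 x = v x := by
    intro x
    rw [hW]
    have : univ.filter (fun z => G.dist x z = 0) = {x} := by
      ext z
      simp only [mem_filter, mem_univ, true_and, mem_singleton]
      rw [hG.connected.dist_eq_zero_iff]
      exact eq_comm
    simp only [this, Finset.sum_singleton]
  have hW1 : ∀ x : V, W 1 x = ((a 3 : ℝ)) * v x := by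
    intro x
    rw [hW, ← hv x]
    apply Finset.sum_congr
    · apply Finset.filter_congr
      intro z _
      simp [dist_eq_one_iff_adj]
    · intro _ _; rfl
  -- the three counting functions
  have hf1 : ∀ z x : V, ((univ.filter fun w => G.Adj x w ∧ G.dist z w = 1).card)
      = (fun j => if j = 0 then b 0 else if j = 1 then a 1 else if j = 2 then c 2 else 0)
        (G.dist x z) := by
    intro z x
    obtain h0 | h1 | h2 | h3 : G.dist x z = 0 ∨ G.dist x z = 1 ∨ G.dist x z = 2 ∨
        G.dist x z = 3 := by have := hG.le_diam x z; omega
    · have hzx : z = x := ((hG.connected.dist_eq_zero_iff).1 h0).symm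
      subst hzx
      simp only [h0]
      norm_num
      simpa using fcard_b hG (by omega : 0 ≤ 3) (G.dist_self (v := z))
    · have h1' : G.dist z x = 1 := by rw [SimpleGraph.dist_comm]; exact h1
      simp only [h1]
      simpa using fcard_a hG (by omega : 1 ≤ 3) h1'
    · have h2' : G.dist z x = 2 := by rw [SimpleGraph.dist_comm]; exact h2
      simp only [h2]
      simpa using fcard_c hG (by omega : 2 ≤ 3) h2'
    · have hemp : (univ.filter fun w => G.Adj x w ∧ G.dist z w = 1) = ∅ := by
        rw [Finset.filter_eq_empty_iff]
        rintro w - ⟨hadj, hdw⟩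
        have ht : G.dist z x ≤ G.dist z w + G.dist w x := hG.connected.dist_triangle
        have h2 : G.dist z x = 3 := by rw [SimpleGraph.dist_comm]; exact h3
        rw [dist_eq_one_iff_adj.2 hadj.symm] at ht
        omega
      simp only [h3]
      rw [hemp]
      simp
  have hf2 : ∀ z x : V, ((univ.filter fun w => G.Adj x w ∧ G.dist z w = 2).card)
      = (fun j => if j = 1 then b 1 else if j = 2 then a 2 else if j = 3 then c 3 else 0)
        (G.dist x z) := by
    intro z x
    obtain h0 | h1 | h2 | h3 : G.dist x z = 0 ∨ G.dist x z = 1 ∨ G.dist x z = 2 ∨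
        G.dist x z = 3 := by have := hG.le_diam x z; omega
    · have hzx : z = x := ((hG.connected.dist_eq_zero_iff).1 h0).symm
      subst hzx
      have hemp : (univ.filter fun w => G.Adj z w ∧ G.dist z w = 2) = ∅ := by
        rw [Finset.filter_eq_empty_iff]
        rintro w - ⟨hadj, hdw⟩
        rw [dist_eq_one_iff_adj.2 hadj] at hdw
        omega
      simp [h0, hemp]
    · have h1' : G.dist z x = 1 := by rw [SimpleGraph.dist_comm]; exact h1
      simp only [h1]
      simpa using fcard_b hG (by omega : 1 ≤ 3) h1'
    · have h2' : G.dist z x = 2 := by rw [SimpleGraph.dist_comm]; exact h2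
      simp only [h2]
      simpa using fcard_a hG (by omega : 2 ≤ 3) h2'
    · have h3' : G.dist z x = 3 := by rw [SimpleGraph.dist_comm]; exact h3
      simp only [h3]
      simpa using fcard_c hG (by omega : 3 ≤ 3) h3'
  have hf3 : ∀ z x : V, ((univ.filter fun w => G.Adj x w ∧ G.dist z w = 3).card)
      = (fun j => if j = 2 then b 2 else if j = 3 then a 3 else 0) (G.dist x z) := by
    intro z x
    obtain h0 | h1 | h2 | h3 : G.dist x z = 0 ∨ G.dist x z = 1 ∨ G.dist x z = 2 ∨
        G.dist x z = 3 := by have := hG.le_diam x z; omega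
    · have hzx : z = x := ((hG.connected.dist_eq_zero_iff).1 h0).symm
      subst hzx
      have hemp : (univ.filter fun w => G.Adj z w ∧ G.dist z w = 3) = ∅ := by
        rw [Finset.filter_eq_empty_iff]
        rintro w - ⟨hadj, hdw⟩
        rw [dist_eq_one_iff_adj.2 hadj] at hdw
        omega
      simp [h0, hemp]
    · have hemp : (univ.filter fun w => G.Adj x w ∧ G.dist z w = 3) = ∅ := by
        rw [Finset.filter_eq_empty_iff]
        rintro w - ⟨hadj, hdw⟩
        have ht : G.dist z w ≤ G.dist z x + G.dist x w := hG.connected.dist_triangle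
        have h1' : G.dist z x = 1 := by rw [SimpleGraph.dist_comm]; exact h1
        rw [dist_eq_one_iff_adj.2 hadj] at ht
        omega
      simp only [h1]
      rw [hemp]
      simp
    · have h2' : G.dist z x = 2 := by rw [SimpleGraph.dist_comm]; exact h2
      simp only [h2]
      simpa using fcard_b hG (by omega : 2 ≤ 3) h2'
    · have h3' : G.dist z x = 3 := by rw [SimpleGraph.dist_comm]; exact h3
      simp only [h3]
      simpa using fcard_a hG (by omega : 3 ≤ 3) h3'
  -- instantiated key identities
  have key1 : ∀ x : V, ∑ y ∈ univ.filter (fun y => G.Adj x y), W 1 y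
      = (b 0 : ℝ) * W 0 x + (a 1 : ℝ) * W 1 x + (c 2 : ℝ) * W 2 x := by
    intro x
    have := spectral_key hG v 1 (fun j => if j = 0 then b 0 else if j = 1 then a 1 else if j = 2 then c 2 else 0) hf1 x
    rw [Finset.sum_range_succ, Finset.sum_range_succ, Finset.sum_range_succ,
      Finset.sum_range_succ] at this
    norm_num [-SimpleGraph.dist_eq_one_iff_adj,
      -SimpleGraph.dist_eq_zero_iff_eq_or_not_reachable] at this
    simp only [hW]
    exact this
  have key2 : ∀ x : V, ∑ y ∈ univ.filter (fun y => G.Adj x y), W 2 y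
      = (b 1 : ℝ) * W 1 x + (a 2 : ℝ) * W 2 x + (c 3 : ℝ) * W 3 x := by
    intro x
    have := spectral_key hG v 2 (fun j => if j = 1 then b 1 else if j = 2 then a 2 else if j = 3 then c 3 else 0) hf2 x
    rw [Finset.sum_range_succ, Finset.sum_range_succ, Finset.sum_range_succ,
      Finset.sum_range_succ] at this
    norm_num [-SimpleGraph.dist_eq_one_iff_adj,
      -SimpleGraph.dist_eq_zero_iff_eq_or_not_reachable] at this
    simp only [hW]
    exact this
  have key3 : ∀ x : V, ∑ y ∈ univ.filter (fun y => G.Adj x y), W 3 y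
      = (b 2 : ℝ) * W 2 x + (a 3 : ℝ) * W 3 x := by
    intro x
    have := spectral_key hG v 3 (fun j => if j = 2 then b 2 else if j = 3 then a 3 else 0) hf3 x
    rw [Finset.sum_range_succ, Finset.sum_range_succ, Finset.sum_range_succ,
      Finset.sum_range_succ] at this
    norm_num [-SimpleGraph.dist_eq_one_iff_adj,
      -SimpleGraph.dist_eq_zero_iff_eq_or_not_reachable] at this
    simp only [hW]
    exact this
  -- solve the recurrence
  have E2 : ∀ x : V, (c 2 : ℝ) * W 2 x = (((a 3 : ℝ))*((a 3 : ℝ)) - (a 1 : ℝ)*((a 3 : ℝ)) - (b 0 : ℝ)) * v x := by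
    intro x
    have k1 := key1 x
    rw [Finset.sum_congr rfl (fun y _ => hW1 y), ← Finset.mul_sum, hv x, hW0 x, hW1 x] at k1
    linear_combination -k1
  have E3 : ∀ x : V, (c 2 : ℝ) * (c 3 : ℝ) * W 3 x
      = ((((a 3 : ℝ))*((a 3 : ℝ)) - (a 1 : ℝ)*((a 3 : ℝ)) - (b 0 : ℝ))*((a 3 : ℝ)) - (c 2 : ℝ)*(b 1 : ℝ)*((a 3 : ℝ))
        - (a 2 : ℝ)*(((a 3 : ℝ))*((a 3 : ℝ)) - (a 1 : ℝ)*((a 3 : ℝ)) - (b 0 : ℝ))) * v x := by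
    intro x
    have k2 := congrArg (fun r => (c 2 : ℝ) * r) (key2 x)
    simp only [Finset.mul_sum] at k2
    rw [Finset.sum_congr rfl (fun y _ => E2 y), ← Finset.mul_sum, hv x, hW1 x] at k2
    linear_combination (-1 : ℝ) * k2 - (a 2 : ℝ) * E2 x
  have final : ∀ x : V, (b 2 : ℝ) * (c 3 : ℝ) * ((((a 3 : ℝ))*((a 3 : ℝ)) - (a 1 : ℝ)*((a 3 : ℝ)) - (b 0 : ℝ)) * v x) = 0 := by
    intro x
    have k3 := congrArg (fun r => (c 2 : ℝ) * (c 3 : ℝ) * r) (key3 x)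
    simp only [Finset.mul_sum] at k3
    rw [Finset.sum_congr rfl (fun y _ => E3 y), ← Finset.mul_sum, hv x] at k3
    linear_combination (-1 : ℝ) * k3 - ((a 3 : ℝ)) * E3 x - (b 2 : ℝ) * (c 3 : ℝ) * E2 x
  obtain ⟨x0, hx0⟩ : ∃ x : V, v x ≠ 0 := by
    by_contra hc
    push_neg at hc
    exact hv0 (funext fun x => hc x)
  have hQ : ((a 3 : ℝ))*((a 3 : ℝ)) - (a 1 : ℝ)*((a 3 : ℝ)) - (b 0 : ℝ) = 0 := by
    have h := final x0
    have hne : ((b 2 : ℝ)) * ((c 3 : ℝ)) * v x0 ≠ 0 := by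
      refine mul_ne_zero (mul_ne_zero ?_ ?_) hx0
      · exact Nat.cast_ne_zero.2 (by omega)
      · exact Nat.cast_ne_zero.2 (by omega)
    have h' : (((a 3 : ℝ))*((a 3 : ℝ)) - (a 1 : ℝ)*((a 3 : ℝ)) - (b 0 : ℝ))
        * (((b 2 : ℝ)) * ((c 3 : ℝ)) * v x0) = 0 := by linear_combination h
    rcases mul_eq_zero.1 h' with h'' | h''
    · exact h''
    · exact absurd h'' hne
  have : ((b 0 : ℕ) : ℝ) = ((β * a 3 : ℕ) : ℝ) := by
    push_cast [hβ] at hQ ⊢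
    linear_combination -hQ
  exact_mod_cast this

/-- main per-pair equation -/
lemma main_eq (hG : IsDRG G 3 b c a) {β : ℕ} (hβ2 : 2 ≤ β) (hβ : a 3 = a 1 + β)
    (hk : b 0 = β * a 3) {x y : V} (hxy : G.dist x y = 3) :
    (β + a 3) * b 2
      = (1 + a 3 + (univ.filter fun z => G.dist x z = 3 ∧ G.dist y z = 3).card) * c 2 := by
  obtain ⟨z2, hz2adj, hz2⟩ := penult hG.connected hxy
  obtain ⟨z1, hz1adj, hz1⟩ := penult hG.connected hz2
  -- ℕ facts
  have hn1 : (univ.filter fun z => G.dist x z = 1).card = b 0 := by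
    rw [← deg_eq hG x]
    congr 1
    apply Finset.filter_congr
    intro z _
    exact dist_eq_one_iff_adj
  have h12 := level_count hG (by omega : 1 ≤ 2) x
  have h23 := level_count hG (by omega : 2 ≤ 2) x
  have hn3 := sphere3_split hG hxy
  have hbig := big_identity hG hxy
  have hs3 := deg_split3 hG hxy
  have hs1 := deg_split1 hG hz1adj
  -- move to ℤ
  have h1 : (b 0 : ℤ) = (β : ℤ) * (a 3 : ℤ) := by exact_mod_cast hk
  have h2 : (b 0 : ℤ) = (c 3 : ℤ) + (a 3 : ℤ) := by exact_mod_cast hs3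
  have h3 : (b 0 : ℤ) = 1 + (a 1 : ℤ) + (b 1 : ℤ) := by exact_mod_cast hs1
  have h4 : (a 3 : ℤ) = (a 1 : ℤ) + (β : ℤ) := by exact_mod_cast hβ
  have h5 : ((univ.filter fun z => G.dist x z = 1).card : ℤ) = (b 0 : ℤ) := by
    exact_mod_cast hn1
  have h6 : ((univ.filter fun z => G.dist x z = 1).card : ℤ) * (b 1 : ℤ)
      = ((univ.filter fun z => G.dist x z = 1 + 1).card : ℤ) * (c 2 : ℤ) := by
    exact_mod_cast h12
  have h7 : ((univ.filter fun z => G.dist x z = 2).card : ℤ) * (b 2 : ℤ)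
      = ((univ.filter fun z => G.dist x z = 2 + 1).card : ℤ) * (c 3 : ℤ) := by
    exact_mod_cast h23
  have h8 : ((univ.filter fun z => G.dist x z = 3).card : ℤ)
      = 1 + (a 3 : ℤ) + ((univ.filter fun z => G.dist x z = 3 ∧ G.dist y z = 2).card : ℤ)
        + ((univ.filter fun z => G.dist x z = 3 ∧ G.dist y z = 3).card : ℤ) := by
    exact_mod_cast hn3
  have h9 : (c 2 : ℤ) * ((univ.filter fun z => G.dist x z = 3 ∧ G.dist y z = 2).card : ℤ)
      + (a 3 : ℤ) * (a 1 : ℤ) + ((a 3 : ℤ) + (c 3 : ℤ))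
      = (a 3 : ℤ) * (a 3 : ℤ) + (c 3 : ℤ) * (b 2 : ℤ) := by exact_mod_cast hbig
  have h67 : ((univ.filter fun z => G.dist x z = 1 + 1).card : ℤ)
      = ((univ.filter fun z => G.dist x z = 2).card : ℤ) := by norm_num
  have h78 : ((univ.filter fun z => G.dist x z = 2 + 1).card : ℤ)
      = ((univ.filter fun z => G.dist x z = 3).card : ℤ) := by norm_num
  rw [h67] at h6
  rw [h78] at h7
  set N2 : ℤ := ((univ.filter fun z => G.dist x z = 2).card : ℤ)
  set N3 : ℤ := ((univ.filter fun z => G.dist x z = 3).card : ℤ)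
  set P2 : ℤ := ((univ.filter fun z => G.dist x z = 3 ∧ G.dist y z = 2).card : ℤ)
  set P3 : ℤ := ((univ.filter fun z => G.dist x z = 3 ∧ G.dist y z = 3).card : ℤ)
  -- derived identities
  have s1 : N2 * (c 2 : ℤ) = (b 0 : ℤ) * (b 1 : ℤ) := by
    linear_combination -h6 + (b 1 : ℤ) * h5
  have s2 : N3 * (c 3 : ℤ) * (c 2 : ℤ) = (b 0 : ℤ) * (b 1 : ℤ) * (b 2 : ℤ) := by
    linear_combination -(c 2 : ℤ) * h7 + (b 2 : ℤ) * s1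
  have s3 : (c 3 : ℤ) = ((β : ℤ) - 1) * (a 3 : ℤ) := by linear_combination h1 - h2
  have s4 : (b 1 : ℤ) = ((β : ℤ) - 1) * ((a 3 : ℤ) + 1) := by
    linear_combination -h3 + h1 + h4
  have s5 : (c 2 : ℤ) * P2 = ((β : ℤ) - 1) * (a 3 : ℤ) * (b 2 : ℤ) := by
    linear_combination h9 + ((b 2 : ℤ) - 1) * s3 + (a 3 : ℤ) * h4
  rw [s3, h1, s4, h8] at s2
  have s6 : (((β : ℤ) - 1) * (a 3 : ℤ)) * (((β : ℤ) + (a 3 : ℤ)) * (b 2 : ℤ))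
      = (((β : ℤ) - 1) * (a 3 : ℤ)) * ((1 + (a 3 : ℤ) + P3) * (c 2 : ℤ)) := by
    linear_combination -s2 + ((β : ℤ) - 1) * (a 3 : ℤ) * s5
  have hD : (((β : ℤ) - 1) * (a 3 : ℤ)) ≠ 0 := by
    have hb' : (2 : ℤ) ≤ (β : ℤ) := by exact_mod_cast hβ2
    have ha' : (1 : ℤ) ≤ (a 3 : ℤ) := by exact_mod_cast (show 1 ≤ a 3 by omega)
    exact mul_ne_zero (by omega) (by omega)
  have s7 := mul_left_cancel₀ hD s6
  rw [show P3 = ((univ.filter fun z => G.dist x z = 3 ∧ G.dist y z = 3).card : ℤ) from rfl] at s7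
  exact_mod_cast s7

end Aux

/-- For a Shilla distance-regular graph with `b = b(Γ)`: `c₂ ∣ (b + a₃)·b₂`, and
`(b + a₃)·b₂ ≥ (1 + a₃)·c₂` with equality iff `p³₃₃ = 0`. -/
theorem stmt10 {V : Type*} [Fintype V] [DecidableEq V] (G : SimpleGraph V)
    [DecidableRel G.Adj] (b c a : ℕ → ℕ) (hG : IsShilla G b c a)
    (β : ℕ) (hβ2 : 2 ≤ β) (hβ : a 3 = a 1 + β) :
    c 2 ∣ (β + a 3) * b 2 ∧ (1 + a 3) * c 2 ≤ (β + a 3) * b 2 ∧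
    (∀ x y : V, G.dist x y = 3 →
      ((β + a 3) * b 2 = (1 + a 3) * c 2 ↔
        Nat.card {z : V | G.dist x z = 3 ∧ G.dist y z = 3} = 0)) := by
  obtain ⟨hDRG, hsec⟩ := hG
  obtain ⟨x0, y0, hxy0⟩ := hDRG.exists_diam
  obtain ⟨z2, hz2adj, hz2⟩ := penult hDRG.connected hxy0
  have hc3 : 0 < c 3 := by
    rw [← fcard_c hDRG (le_refl 3) hxy0]
    refine Finset.card_pos.2 ⟨z2, ?_⟩
    simp only [Finset.mem_filter, Finset.mem_univ, true_and]
    exact ⟨hz2adj.symm, by simpa using hz2⟩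
  have hb2 : 0 < b 2 := by
    rw [← fcard_b hDRG (by omega : 2 ≤ 3) hz2]
    refine Finset.card_pos.2 ⟨y0, ?_⟩
    simp only [Finset.mem_filter, Finset.mem_univ, true_and]
    exact ⟨hz2adj, by simpa using hxy0⟩
  obtain ⟨z1, hz1adj, hz1⟩ := penult hDRG.connected hz2
  have hc2 : 0 < c 2 := by
    rw [← fcard_c hDRG (by omega : 2 ≤ 3) hz2]
    refine Finset.card_pos.2 ⟨z1, ?_⟩
    simp only [Finset.mem_filter, Finset.mem_univ, true_and]
    exact ⟨hz1adj.symm, by simpa using hz1⟩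
  have hk : b 0 = β * a 3 := k_eq_beta_a3 hDRG hsec.1 hβ hb2 hc3
  have main : ∀ x y : V, G.dist x y = 3 → (β + a 3) * b 2
      = (1 + a 3 + (Finset.univ.filter fun z => G.dist x z = 3 ∧ G.dist y z = 3).card) * c 2 :=
    fun x y h => main_eq hDRG hβ2 hβ hk h
  refine ⟨?_, ?_, ?_⟩
  · exact ⟨1 + a 3 + (Finset.univ.filter fun z => G.dist x0 z = 3 ∧ G.dist y0 z = 3).card,
      by rw [main x0 y0 hxy0]; ring⟩
  · rw [main x0 y0 hxy0]
    exact Nat.mul_le_mul_right _ (by omega)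
  · intro x y hxy
    rw [ncard_setOf]
    constructor
    · intro he
      have h2 := main x y hxy
      rw [he] at h2
      have h3 := Nat.eq_of_mul_eq_mul_right hc2 h2
      omega
    · intro hp
      rw [main x y hxy, hp]
      simp
end
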